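/- arXiv:2110.07497 — 6 statements merged into one kernel-verified Lean document; each statement's English description precedes it below -/
import Mathlib

section
/- Let $p \ge 1$ and for $r > 0$ define $\mathcal{D}_p^*(r) = \{(i_1,\dots,i_p) \in \mathbb{N}^p : i_1 < i_2 < \cdots < i_p,\ i_1 i_2 \cdots i_p \le r\}$. Then as $r \to \infty$, the cardinality $|\mathcal{D}_p^*(r)|$ is asymptotically equivalent to $\frac{r (\log r)^{p-1}}{p!\,(p-1)!}$, i.e. $\lim_{r\to\infty} \frac{|\mathcal{D}_p^*(r)|\, p!\,(p-1)!}{r(\log r)^{p-1}} = 1$. -/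
/-! Let `tupleCount p r` count all `p`-tuples of positive integers with product at most `r`.
Splitting off the first coordinate gives `tupleCount (p + 1) r = ∑_{m ≤ r} tupleCount p (r / m)`,
and comparing `∑_{m ≤ r} (log r - log m) ^ q / m` with
`∫_1^r (log r - log t) ^ q / t dt = (log r) ^ (q + 1) / (q + 1)` turns the recursion into
`tupleCount (q + 1) r = r (log r) ^ q / q! + O(r (1 + log r) ^ (q - 1))`.
A tuple with two equal entries is determined by the others, so there are only
`O(tupleCount (p - 1) r) = o(r (log r) ^ (p - 1))` of them, while the injective tuples are exactly
the `p!` rearrangements of the strictly increasing ones. -/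

open Finset Real Filter Asymptotics intervalIntegral
open scoped Nat

theorem Tuple.eq_sort_of_injective {α : Type*} [LinearOrder α] {p : ℕ} {g : Fin p → α}
    (hg : Function.Injective g) {σ : Equiv.Perm (Fin p)} (hσ : Monotone (g ∘ σ)) :
    σ = Tuple.sort g :=
  Equiv.ext fun k => hg (congrFun (Tuple.comp_sort_eq_comp_iff_monotone.2 hσ) k)

open scoped Classical in
theorem card_filter_injective_eq_factorial_mul {α : Type*} [LinearOrder α] {p : ℕ}
    (s : Finset (Fin p → α)) (hs : ∀ f ∈ s, ∀ σ : Equiv.Perm (Fin p), f ∘ σ ∈ s) :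
    #{f ∈ s | Function.Injective f} = p ! * #{f ∈ s | StrictMono f} := by
  rw [show p ! = #(univ : Finset (Equiv.Perm (Fin p))) by simp [Fintype.card_perm],
    ← card_product]
  symm
  refine card_nbij' (fun x => x.2 ∘ x.1.symm) (fun g => (Tuple.sort g, g ∘ Tuple.sort g))
    ?_ ?_ ?_ ?_
  · rintro ⟨σ, f⟩ hf
    simp only [mem_coe, mem_product, mem_univ, true_and, mem_filter] at hf ⊢
    exact ⟨hs f hf.1 _, hf.2.injective.comp σ.symm.injective⟩
  · intro g hg
    simp only [mem_coe, mem_product, mem_univ, true_and, mem_filter] at hg ⊢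
    exact ⟨hs g hg.1 _, (Tuple.monotone_sort g).strictMono_of_injective
      (hg.2.comp (Tuple.sort g).injective)⟩
  · rintro ⟨σ, f⟩ hf
    simp only [mem_coe, mem_product, mem_univ, true_and, mem_filter] at hf
    have hσ : σ = Tuple.sort (f ∘ σ.symm) :=
      Tuple.eq_sort_of_injective (hf.2.injective.comp σ.symm.injective)
        (by simpa [Function.comp_assoc] using hf.2.monotone)
    simp [← hσ, Function.comp_assoc]
  · intro g _
    simp [Function.comp_assoc]

theorem AntitoneOn.abs_sum_Icc_floor_sub_integral_le {f : ℝ → ℝ} {r : ℝ}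
    (hf : AntitoneOn f (Set.Icc 1 r)) (hr : 1 ≤ r) (hf0 : ∀ x ∈ Set.Icc 1 r, 0 ≤ f x) :
    |∑ m ∈ Icc 1 ⌊r⌋₊, f m - ∫ x in (1 : ℝ)..r, f x| ≤ f 1 := by
  set M := ⌊r⌋₊
  have hM1 : 1 ≤ M := Nat.le_floor (by exact_mod_cast hr)
  have hM1' : (1 : ℝ) ≤ M := by exact_mod_cast hM1
  have hMr : (M : ℝ) ≤ r := Nat.floor_le (by linarith)
  have hrM : r ≤ M + 1 := (Nat.lt_floor_add_one r).le
  have hfM : AntitoneOn f (Set.Icc ((1 : ℕ) : ℝ) M) := by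
    simpa using hf.mono (Set.Icc_subset_Icc_right hMr)
  have hint : ∀ a b, 1 ≤ a → a ≤ b → b ≤ r →
      IntervalIntegrable f MeasureTheory.volume a b :=
    fun a b ha hab hb =>
      (hf.mono (by rw [Set.uIcc_of_le hab]; exact Set.Icc_subset_Icc ha hb)).intervalIntegrable
  have hsplit :
      ∫ x in (1 : ℝ)..r, f x = (∫ x in (1 : ℝ)..M, f x) + ∫ x in (M : ℝ)..r, f x :=
    (integral_add_adjacent_intervals (hint _ _ le_rfl hM1' hMr) (hint _ _ hM1' hMr le_rfl)).symm
  have htail_nonneg : 0 ≤ ∫ x in (M : ℝ)..r, f x :=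
    integral_nonneg hMr fun x hx => hf0 x ⟨hM1'.trans hx.1, hx.2⟩
  have htail_le : ∫ x in (M : ℝ)..r, f x ≤ f M := by
    calc ∫ x in (M : ℝ)..r, f x ≤ ∫ _ in (M : ℝ)..r, f M :=
          integral_mono_on hMr (hint _ _ hM1' hMr le_rfl) intervalIntegrable_const
            fun x hx => hf ⟨hM1', hMr⟩ ⟨hM1'.trans hx.1, hx.2⟩ hx.1
      _ = (r - M) * f M := by simp
      _ ≤ 1 * f M := mul_le_mul_of_nonneg_right (by linarith) (hf0 M ⟨hM1', hMr⟩)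
      _ = f M := one_mul _
  have hlower : ∫ x in (1 : ℝ)..M, f x ≤ ∑ m ∈ Ico 1 M, f m := by
    exact_mod_cast hfM.integral_le_sum_Ico hM1
  have hupper : ∑ m ∈ Ico 1 M, f (m + 1 : ℕ) ≤ ∫ x in (1 : ℝ)..M, f x := by
    exact_mod_cast hfM.sum_le_integral_Ico hM1
  have hsum_top : ∑ m ∈ Icc 1 M, f m = ∑ m ∈ Ico 1 M, f m + f M := by
    rw [← Finset.Ico_add_one_right_eq_Icc, sum_Ico_succ_top hM1]
  have hsum_bot : ∑ m ∈ Icc 1 M, f m = f 1 + ∑ m ∈ Ico 1 M, f (m + 1 : ℕ) := by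
    rw [← Finset.Ico_add_one_right_eq_Icc, sum_eq_sum_Ico_succ_bot (by omega),
      sum_Ico_add' (fun m : ℕ => f m)]
    simp
  rw [abs_le]
  constructor <;> linarith [hf0 1 ⟨le_rfl, hr⟩]

namespace Dstar

def prodLeTuples (p N : ℕ) : Finset (Fin p → ℕ) :=
  {i ∈ Fintype.piFinset fun _ => Icc 1 N | ∏ j, i j ≤ N}

theorem mem_prodLeTuples {p N : ℕ} {i : Fin p → ℕ} :
    i ∈ prodLeTuples p N ↔ (∀ j, 0 < i j) ∧ ∏ j, i j ≤ N := by
  simp only [prodLeTuples, mem_filter, Fintype.mem_piFinset, mem_Icc]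
  refine ⟨fun h => ⟨fun j => (h.1 j).1, h.2⟩, fun h => ⟨fun j => ⟨h.1 j, ?_⟩, h.2⟩⟩
  exact (single_le_prod' (fun k _ => h.1 k) (mem_univ j)).trans h.2

theorem comp_perm_mem_prodLeTuples {p N : ℕ} {i : Fin p → ℕ} (hi : i ∈ prodLeTuples p N)
    (σ : Equiv.Perm (Fin p)) : i ∘ σ ∈ prodLeTuples p N := by
  rw [mem_prodLeTuples] at hi ⊢
  exact ⟨fun j => hi.1 _, (Equiv.prod_comp σ i).trans_le hi.2⟩

theorem cons_mem_prodLeTuples_iff {p N m : ℕ} (hm : 0 < m) {g : Fin p → ℕ} :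
    (Fin.cons m g : Fin (p + 1) → ℕ) ∈ prodLeTuples (p + 1) N ↔
      g ∈ prodLeTuples p (N / m) := by
  simp [mem_prodLeTuples, Fin.forall_fin_succ, Fin.prod_univ_succ, hm,
    Nat.le_div_iff_mul_le hm, mul_comm]

theorem card_prodLeTuples_one (N : ℕ) : #(prodLeTuples 1 N) = N := by
  have : prodLeTuples 1 N = (Icc 1 N).map (Equiv.funUnique (Fin 1) ℕ).symm.toEmbedding := by
    ext i
    simp [mem_prodLeTuples, Equiv.funUnique, Fin.forall_fin_one, Nat.one_le_iff_ne_zero,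
      Nat.pos_iff_ne_zero]
  simp [this]

theorem card_prodLeTuples_succ (p N : ℕ) :
    #(prodLeTuples (p + 1) N) = ∑ m ∈ Icc 1 N, #(prodLeTuples p (N / m)) := by
  rw [card_eq_sum_card_fiberwise (f := fun i => i 0) (t := Icc 1 N)]
  · refine sum_congr rfl fun m hm => ?_
    have hm : 0 < m := (mem_Icc.1 hm).1
    rw [← card_map ⟨_, Fin.cons_right_injective (n := p) (α := fun _ => ℕ) m⟩]
    congr 1
    ext i
    simp only [Finset.mem_map, mem_filter, Function.Embedding.coeFn_mk]
    constructor
    · rintro ⟨hi, rfl⟩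
      rw [← Fin.cons_self_tail i, cons_mem_prodLeTuples_iff hm] at hi
      exact ⟨_, hi, Fin.cons_self_tail i⟩
    · rintro ⟨g, hg, rfl⟩
      exact ⟨(cons_mem_prodLeTuples_iff hm).2 hg, rfl⟩
  · intro i hi
    rw [mem_coe, mem_prodLeTuples] at hi
    exact mem_Icc.2 ⟨hi.1 0, (single_le_prod' (fun k _ => hi.1 k) (mem_univ 0)).trans hi.2⟩

open scoped Classical in
theorem card_prodLeTuples_eq (p N : ℕ) :
    #(prodLeTuples p N) = p ! * #{i ∈ prodLeTuples p N | StrictMono i} +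
      #{i ∈ prodLeTuples p N | ¬Function.Injective i} := by
  rw [← card_filter_injective_eq_factorial_mul _ fun i hi σ => comp_perm_mem_prodLeTuples hi σ,
    card_filter_add_card_filter_not]

theorem card_filter_apply_eq_apply_le {q N : ℕ} {a b : Fin (q + 1)} (hab : a ≠ b) :
    #{i ∈ prodLeTuples (q + 1) N | i a = i b} ≤ #(prodLeTuples q N) := by
  refine card_le_card_of_injOn (fun i => i ∘ b.succAbove) (fun i hi => ?_)
    (fun i hi i' hi' h => ?_)
  · simp only [mem_coe, mem_filter, mem_prodLeTuples] at hi ⊢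
    refine ⟨fun k => hi.1.1 _, le_trans ?_ hi.1.2⟩
    rw [Fin.prod_univ_succAbove _ b]
    exact Nat.le_mul_of_pos_left _ (hi.1.1 b)
  · simp only [mem_coe, mem_filter] at hi hi'
    have hoff : ∀ k, i (b.succAbove k) = i' (b.succAbove k) := congrFun h
    funext j
    rcases Fin.eq_self_or_eq_succAbove b j with rfl | ⟨k, rfl⟩
    · obtain ⟨k, hk⟩ := Fin.exists_succAbove_eq hab
      rw [← hi.2, ← hi'.2, ← hk, hoff]
    · exact hoff k

open scoped Classical in
theorem card_filter_not_injective_le (q N : ℕ) :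
    #{i ∈ prodLeTuples (q + 1) N | ¬Function.Injective i} ≤
      (q + 1) ^ 2 * #(prodLeTuples q N) := by
  have hcover : {i ∈ prodLeTuples (q + 1) N | ¬Function.Injective i} ⊆
      (univ : Finset (Fin (q + 1))).offDiag.biUnion
        fun ab => {i ∈ prodLeTuples (q + 1) N | i ab.1 = i ab.2} := by
    intro i hi
    simp only [mem_filter, Function.not_injective_iff] at hi
    obtain ⟨hi, a, b, hab, hne⟩ := hi
    simp only [mem_biUnion, mem_offDiag, mem_filter]
    exact ⟨(a, b), ⟨mem_univ a, mem_univ b, hne⟩, hi, hab⟩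
  calc #{i ∈ prodLeTuples (q + 1) N | ¬Function.Injective i}
      ≤ ∑ ab ∈ (univ : Finset (Fin (q + 1))).offDiag,
          #{i ∈ prodLeTuples (q + 1) N | i ab.1 = i ab.2} :=
        (card_le_card hcover).trans card_biUnion_le
    _ ≤ ∑ _ab ∈ (univ : Finset (Fin (q + 1))).offDiag, #(prodLeTuples q N) :=
        sum_le_sum fun ab hab => card_filter_apply_eq_apply_le (mem_offDiag.1 hab).2.2
    _ ≤ (q + 1) ^ 2 * #(prodLeTuples q N) := by
        rw [sum_const, smul_eq_mul, offDiag_card, card_univ, Fintype.card_fin, sq]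
        exact Nat.mul_le_mul_right _ (Nat.sub_le _ _)

theorem natCard_strictMono_eq_card_filter {p : ℕ} {r : ℝ} (hr : 0 ≤ r) :
    Nat.card {i : Fin p → ℕ // StrictMono i ∧ (∀ j, 0 < i j) ∧ (∏ j, (i j : ℝ)) ≤ r}
      = #{i ∈ prodLeTuples p ⌊r⌋₊ | StrictMono i} := by
  classical
  rw [← Nat.card_eq_finsetCard]
  refine Nat.card_congr (Equiv.subtypeEquivRight fun i => ?_)
  simp only [mem_filter, mem_prodLeTuples, Nat.le_floor_iff hr]
  push_cast
  tauto

theorem antitoneOn_log_sub_log_pow_div (q : ℕ) (r : ℝ) :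
    AntitoneOn (fun t => (log r - log t) ^ q / t) (Set.Icc 1 r) := by
  rintro a ⟨ha1, har⟩ b ⟨-, hbr⟩ hab
  have ha0 : 0 < a := one_pos.trans_le ha1
  have hla : 0 ≤ log r - log a := sub_nonneg.2 (log_le_log ha0 har)
  have hlb : 0 ≤ log r - log b := sub_nonneg.2 (log_le_log (ha0.trans_le hab) hbr)
  exact div_le_div₀ (pow_nonneg hla q)
    (pow_le_pow_left₀ hlb (by linarith [log_le_log ha0 hab]) q) ha0 hab

theorem log_sub_log_pow_div_nonneg (q : ℕ) {r t : ℝ} (ht : t ∈ Set.Icc 1 r) :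
    0 ≤ (log r - log t) ^ q / t := by
  have ht0 : 0 < t := one_pos.trans_le ht.1
  have : 0 ≤ log r - log t := sub_nonneg.2 (log_le_log ht0 ht.2)
  positivity

theorem integral_log_sub_log_pow_div (q : ℕ) {r : ℝ} (hr : 1 ≤ r) :
    ∫ t in (1 : ℝ)..r, (log r - log t) ^ q / t = log r ^ (q + 1) / (q + 1) := by
  have hderiv : ∀ t ∈ Set.uIcc 1 r, HasDerivAt (fun t => -(log r - log t) ^ (q + 1) / (q + 1))
      ((log r - log t) ^ q / t) t := by
    intro t ht
    rw [Set.uIcc_of_le hr] at ht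
    have ht0 : t ≠ 0 := (one_pos.trans_le ht.1).ne'
    refine ((((hasDerivAt_log ht0).const_sub (log r)).pow (q + 1)).neg.div_const
      ((q : ℝ) + 1)).congr_deriv ?_
    push_cast
    field_simp
  have hint : IntervalIntegrable (fun t => (log r - log t) ^ q / t) MeasureTheory.volume 1 r :=
    AntitoneOn.intervalIntegrable (by
      simpa [Set.uIcc_of_le hr] using antitoneOn_log_sub_log_pow_div q r)
  rw [integral_eq_sub_of_hasDerivAt hderiv hint]
  simp [neg_div]

theorem abs_sum_log_sub_log_pow_div_sub_le (q : ℕ) {r : ℝ} (hr : 1 ≤ r) :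
    |∑ m ∈ Icc 1 ⌊r⌋₊, (log r - log m) ^ q / m - log r ^ (q + 1) / (q + 1)| ≤
      log r ^ q := by
  simpa [integral_log_sub_log_pow_div q hr] using
    (antitoneOn_log_sub_log_pow_div q r).abs_sum_Icc_floor_sub_integral_le hr
      fun t => log_sub_log_pow_div_nonneg q

theorem sum_Icc_floor_inv_le {r : ℝ} (hr : 1 ≤ r) :
    ∑ m ∈ Icc 1 ⌊r⌋₊, (m : ℝ)⁻¹ ≤ 1 + log r := by
  have h := abs_sum_log_sub_log_pow_div_sub_le 0 hr
  simp only [pow_zero, one_div, zero_add, pow_one, Nat.cast_zero, div_one] at h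
  linarith [(abs_le.1 h).2]

noncomputable def tupleCount (p : ℕ) (r : ℝ) : ℝ := #(prodLeTuples p ⌊r⌋₊)

theorem tupleCount_one (r : ℝ) : tupleCount 1 r = ⌊r⌋₊ := by
  simp [tupleCount, card_prodLeTuples_one]

theorem tupleCount_succ (p : ℕ) (r : ℝ) :
    tupleCount (p + 1) r = ∑ m ∈ Icc 1 ⌊r⌋₊, tupleCount p (r / m) := by
  simp [tupleCount, card_prodLeTuples_succ, Nat.floor_div_natCast]

theorem abs_tupleCount_succ_succ_sub_le (q : ℕ) {r : ℝ} (hr : 1 ≤ r) :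
    |tupleCount (q + 2) r - r * log r ^ (q + 1) / (q + 1)!| ≤
      ∑ m ∈ Icc 1 ⌊r⌋₊, |tupleCount (q + 1) (r / m) - r / m * log (r / m) ^ q / q !| +
        r * log r ^ q / q ! := by
  have hsum : ∑ m ∈ Icc 1 ⌊r⌋₊, r / m * log (r / m) ^ q / q ! =
      r / q ! * ∑ m ∈ Icc 1 ⌊r⌋₊, (log r - log m) ^ q / m := by
    rw [mul_sum]
    refine sum_congr rfl fun m hm => ?_
    have hm : (m : ℝ) ≠ 0 := by have := (mem_Icc.1 hm).1; positivity
    rw [log_div (by positivity) hm]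
    ring
  have hmain : r * log r ^ (q + 1) / (q + 1)! = r / q ! * (log r ^ (q + 1) / (q + 1)) := by
    rw [Nat.factorial_succ]
    push_cast
    field_simp
  rw [tupleCount_succ]
  calc _ = |∑ m ∈ Icc 1 ⌊r⌋₊,
          (tupleCount (q + 1) (r / m) - r / m * log (r / m) ^ q / q !) +
        r / q ! * (∑ m ∈ Icc 1 ⌊r⌋₊, (log r - log m) ^ q / m - log r ^ (q + 1) / (q + 1))| := by
        rw [sum_sub_distrib, hsum, hmain]
        ring_nf
    _ ≤ ∑ m ∈ Icc 1 ⌊r⌋₊, |tupleCount (q + 1) (r / m) - r / m * log (r / m) ^ q / q !| +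
        r / q ! * log r ^ q := by
        refine (abs_add_le _ _).trans (add_le_add (abs_sum_le_sum_abs _ _) ?_)
        rw [abs_mul, abs_of_nonneg (by positivity)]
        exact mul_le_mul_of_nonneg_left (abs_sum_log_sub_log_pow_div_sub_le q hr)
          (by positivity)
    _ = _ := by ring

theorem exists_abs_tupleCount_sub_le (q : ℕ) : ∃ C, 0 ≤ C ∧ ∀ r, 1 ≤ r →
    |tupleCount (q + 2) r - r * log r ^ (q + 1) / (q + 1)!| ≤ C * (r * (1 + log r) ^ q) := by
  induction q with
  | zero =>
    refine ⟨2, by norm_num, fun r hr => (abs_tupleCount_succ_succ_sub_le 0 hr).trans ?_⟩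
    have hfloor : ∀ m ∈ Icc 1 ⌊r⌋₊,
        |tupleCount 1 (r / m) - r / m * log (r / m) ^ 0 / 0 !| ≤ 1 := by
      intro m _
      have hrm : 0 ≤ r / m := by positivity
      rw [tupleCount_one, pow_zero, Nat.factorial_zero, Nat.cast_one, mul_one, div_one, abs_le]
      constructor <;> linarith [Nat.floor_le hrm, Nat.lt_floor_add_one (r / m)]
    calc _ ≤ ∑ _m ∈ Icc 1 ⌊r⌋₊, (1 : ℝ) + r := by
          refine add_le_add (sum_le_sum hfloor) ?_
          simp
      _ ≤ r + r := by
          simpa using Nat.floor_le (by linarith : 0 ≤ r)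
      _ = 2 * (r * (1 + log r) ^ 0) := by ring
  | succ q ih =>
    obtain ⟨C, hC, hbound⟩ := ih
    refine ⟨C + 1, by linarith,
      fun r hr => (abs_tupleCount_succ_succ_sub_le (q + 1) hr).trans ?_⟩
    have hL : 0 ≤ log r := log_nonneg hr
    have hterm : ∀ m ∈ Icc 1 ⌊r⌋₊,
        |tupleCount (q + 2) (r / m) - r / m * log (r / m) ^ (q + 1) / (q + 1)!| ≤
          C * (1 + log r) ^ q * r * (m : ℝ)⁻¹ := by
      intro m hm
      have hm1 : (1 : ℝ) ≤ m := by exact_mod_cast (mem_Icc.1 hm).1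
      have hmr : (m : ℝ) ≤ r :=
        (Nat.cast_le.2 (mem_Icc.1 hm).2).trans (Nat.floor_le (by linarith))
      have hrm : 1 ≤ r / m := (one_le_div (by positivity)).2 hmr
      have hlog : log (r / m) ≤ log r :=
        log_le_log (by positivity) (div_le_self (by linarith) hm1)
      calc _ ≤ C * (r / m * (1 + log (r / m)) ^ q) := hbound _ hrm
        _ ≤ C * (r / m * (1 + log r) ^ q) := by
            gcongr
            linarith [log_nonneg hrm]
        _ = C * (1 + log r) ^ q * r * (m : ℝ)⁻¹ := by ring
    have hfac : r * log r ^ (q + 1) / (q + 1)! ≤ r * (1 + log r) ^ (q + 1) := by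
      rw [mul_div_assoc]
      gcongr
      exact (div_le_self (by positivity) (by exact_mod_cast (q + 1).factorial_pos)).trans
        (pow_le_pow_left₀ hL (by linarith) _)
    calc _ ≤ C * (1 + log r) ^ q * r * ∑ m ∈ Icc 1 ⌊r⌋₊, (m : ℝ)⁻¹ +
          r * (1 + log r) ^ (q + 1) := by
          rw [mul_sum]
          exact add_le_add (sum_le_sum hterm) hfac
      _ ≤ C * (1 + log r) ^ q * r * (1 + log r) + r * (1 + log r) ^ (q + 1) := by
          gcongr
          exact sum_Icc_floor_inv_le hr
      _ = (C + 1) * (r * (1 + log r) ^ (q + 1)) := by ring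

theorem isLittleO_mul_log_pow_mul_log_pow_succ (q : ℕ) :
    (fun r : ℝ => r * log r ^ q) =o[atTop] fun r => r * log r ^ (q + 1) :=
  (isBigO_refl (fun r : ℝ => r) atTop).mul_isLittleO
    ((isLittleO_pow_pow_atTop_of_lt q.lt_succ_self).comp_tendsto tendsto_log_atTop)

theorem isBigO_mul_one_add_log_pow (q : ℕ) :
    (fun r : ℝ => r * (1 + log r) ^ q) =O[atTop] fun r => r * log r ^ q := by
  have hone : (fun _ => (1 : ℝ)) =o[atTop] log :=
    (isLittleO_one_left_iff ℝ).2 (tendsto_norm_atTop_atTop.comp tendsto_log_atTop)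
  have h : (fun r => 1 + log r) ~[atTop] log := by
    refine (IsEquivalent.refl.add_isLittleO hone).congr_left (Eventually.of_forall fun r => ?_)
    simp [add_comm]
  exact (isBigO_refl _ _).mul (h.pow q).isBigO

theorem isEquivalent_tupleCount (q : ℕ) :
    (fun r => q ! * tupleCount (q + 1) r) ~[atTop] fun r => r * log r ^ q := by
  cases q with
  | zero =>
    refine isEquivalent_of_tendsto_one (tendsto_nat_floor_div_atTop.congr fun r => ?_)
    simp [tupleCount_one]
  | succ q =>
    obtain ⟨C, -, hC⟩ := exists_abs_tupleCount_sub_le q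
    have hbound : (fun r => (q + 1)! * tupleCount (q + 2) r - r * log r ^ (q + 1)) =O[atTop]
        fun r => r * (1 + log r) ^ q := by
      refine IsBigO.of_bound ((q + 1)! * C) ?_
      filter_upwards [eventually_ge_atTop 1] with r hr
      have hfac : (0 : ℝ) < (q + 1)! := by positivity
      have hpos : 0 ≤ r * (1 + log r) ^ q := by have := log_nonneg hr; positivity
      have hfactor : (q + 1)! * tupleCount (q + 2) r - r * log r ^ (q + 1) =
          (q + 1)! * (tupleCount (q + 2) r - r * log r ^ (q + 1) / (q + 1)!) := by
        field_simp
      rw [norm_of_nonneg hpos, Real.norm_eq_abs, hfactor, abs_mul, abs_of_pos hfac, mul_assoc]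
      exact mul_le_mul_of_nonneg_left (hC r hr) hfac.le
    exact hbound.trans_isLittleO
      ((isBigO_mul_one_add_log_pow q).trans_isLittleO (isLittleO_mul_log_pow_mul_log_pow_succ q))

open scoped Classical in
theorem isLittleO_card_filter_not_injective (q : ℕ) :
    (fun r : ℝ => (#{i ∈ prodLeTuples (q + 1) ⌊r⌋₊ | ¬Function.Injective i} : ℝ))
      =o[atTop] fun r => r * log r ^ q := by
  cases q with
  | zero => simp [Function.injective_of_subsingleton]
  | succ q =>
    have hbad :
        (fun r : ℝ => (#{i ∈ prodLeTuples (q + 2) ⌊r⌋₊ | ¬Function.Injective i} : ℝ))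
          =O[atTop] fun r => tupleCount (q + 1) r := by
      refine IsBigO.of_bound ((q + 2) ^ 2) (Eventually.of_forall fun r => ?_)
      simp only [tupleCount, Real.norm_eq_abs, Nat.abs_cast]
      exact_mod_cast card_filter_not_injective_le (q + 1) ⌊r⌋₊
    have hcount : (fun r => tupleCount (q + 1) r) =O[atTop] fun r => r * log r ^ q :=
      (isBigO_self_const_mul (by positivity : (q ! : ℝ) ≠ 0) _ _).trans
        (isEquivalent_tupleCount q).isBigO
    exact hbad.trans_isLittleO
      (hcount.trans_isLittleO (isLittleO_mul_log_pow_mul_log_pow_succ q))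

end Dstar

/-- The cardinality of `𝒟_p^*(r) = {i ∈ ℕ^p : 0 < i₁ < ⋯ < i_p, i₁⋯i_p ≤ r}`
is asymptotically `r (log r)^(p-1) / (p! (p-1)!)` as `r → ∞`. -/
theorem card_Dstar_asymp (p : ℕ) (hp : 1 ≤ p) :
    Tendsto
      (fun r : ℝ =>
        ((Nat.card {i : Fin p → ℕ // StrictMono i ∧ (∀ j, 0 < i j) ∧
            (∏ j, (i j : ℝ)) ≤ r} : ℝ) * (Nat.factorial p) * (Nat.factorial (p - 1)))
          / (r * (Real.log r) ^ (p - 1)))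
      atTop (nhds 1) := by
  classical
  obtain ⟨q, rfl⟩ : ∃ q, p = q + 1 := ⟨p - 1, by omega⟩
  have hequiv :
      (fun r : ℝ => (#{i ∈ Dstar.prodLeTuples (q + 1) ⌊r⌋₊ | StrictMono i} : ℝ) *
        (q + 1)! * q !) ~[atTop] fun r => r * log r ^ q := by
    refine ((Dstar.isEquivalent_tupleCount q).sub_isLittleO
      ((Dstar.isLittleO_card_filter_not_injective q).const_mul_left (q ! : ℝ))).congr_left
        (Eventually.of_forall fun r => ?_)
    simp only [Pi.sub_apply, Dstar.tupleCount, Dstar.card_prodLeTuples_eq]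
    push_cast
    ring
  have hne : ∀ᶠ r : ℝ in atTop, r * log r ^ q ≠ 0 := by
    filter_upwards [eventually_gt_atTop 1] with r hr
    have := log_pos hr
    positivity
  refine ((isEquivalent_iff_tendsto_one hne).1 hequiv).congr' ?_
  filter_upwards [eventually_ge_atTop 0] with r hr
  simp [Dstar.natCard_strictMono_eq_card_filter hr]
end

section
/- Let $p \ge 2$, $1 \le r \le p-1$, and $K > 0$. There is a constant $C$ (depending on $p, r, K$) such that for all $R \ge 2$ and all $w \ge 1$, the number of pairs $({\boldsymbol i}, {\boldsymbol i}')$ with ${\boldsymbol i}, {\boldsymbol i}' \in \{(i_1,\dots,i_p) \in \mathbb{N}^p : i_1 < \cdots < i_p \le w,\ i_1 \cdots i_p \le K R\}$ and $|\{i_1,\dots,i_p\} \cap \{i_1',\dots,i_p'\}| = r$ is at most $C R^2 (\log R)^{2(p-r-1)}$. -/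
open Finset Real

/-! The pair `(i, i')` is determined by its common part `m` (an `r`-set) and the two remainders
`a`, `b` (`(p - r)`-sets), with `∏ m * ∏ a ≤ KR` and `∏ m * ∏ b ≤ KR`. For fixed `m`, the
`(p - r)`-tuples of positive integers with product at most `X = KR / ∏ m` number at most
`X (1 + log X) ^ (p - r - 1)`: induct on the length, splitting off the first entry `n` and summing
`X / n` over `n ≤ X` against the harmonic bound. Squaring and summing over `m` leaves
`(KR)² (1 + log KR) ^ (2(p - r - 1)) ∑ₘ (∏ m)⁻²`, and that sum is at most `(∑ₙ n⁻²) ^ r ≤ 2 ^ r`. -/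

lemma sum_Icc_inv_le_one_add_log (N : ℕ) : ∑ n ∈ Icc 1 N, (n : ℝ)⁻¹ ≤ 1 + log N := by
  simpa [harmonic_eq_sum_Icc] using harmonic_le_one_add_log N

lemma sum_Icc_inv_sq_le_two (N : ℕ) : ∑ n ∈ Icc 1 N, ((n : ℝ) ^ 2)⁻¹ ≤ 2 := by
  have hIoo : Ioo 0 (N + 1) = Icc 1 N := by ext; simp only [mem_Ioo, mem_Icc]; omega
  simpa [hIoo] using sum_Ioo_inv_sq_le (α := ℝ) 0 (N + 1)

/-- The box `Icc 1 ⌊X⌋₊` only makes the set finite; see `mem_tuplesProdLe`. -/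
noncomputable def tuplesProdLe (k : ℕ) (X : ℝ) : Finset (Fin k → ℕ) :=
  (Fintype.piFinset fun _ => Icc 1 ⌊X⌋₊).filter fun f => ∏ j, (f j : ℝ) ≤ X

lemma one_le_prod_natCast {ι : Type*} [Fintype ι] {f : ι → ℕ} (hf : ∀ j, 1 ≤ f j) :
    1 ≤ ∏ j, (f j : ℝ) :=
  one_le_prod fun j _ => Nat.one_le_cast.mpr (hf j)

lemma natCast_le_prod_natCast {ι : Type*} [Fintype ι] {f : ι → ℕ} (hf : ∀ j, 1 ≤ f j) (i : ι) :
    (f i : ℝ) ≤ ∏ j, (f j : ℝ) := by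
  rw [← Nat.cast_prod]
  exact_mod_cast single_le_prod' (fun j _ => hf j) (mem_univ i)

lemma mem_tuplesProdLe {k : ℕ} {X : ℝ} {f : Fin k → ℕ} :
    f ∈ tuplesProdLe k X ↔ (∀ j, 1 ≤ f j) ∧ ∏ j, (f j : ℝ) ≤ X := by
  simp only [tuplesProdLe, mem_filter, Fintype.mem_piFinset, mem_Icc, forall_and]
  refine ⟨fun h => ⟨h.1.1, h.2⟩, fun h => ⟨⟨h.1, fun j => Nat.le_floor ?_⟩, h.2⟩⟩
  exact (natCast_le_prod_natCast h.1 j).trans h.2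

lemma card_tuplesProdLe_zero_le (X : ℝ) : #(tuplesProdLe 0 X) ≤ 1 :=
  card_le_one.mpr fun _ _ _ _ => Subsingleton.elim _ _

lemma card_tuplesProdLe_succ_le (k : ℕ) (X : ℝ) :
    #(tuplesProdLe (k + 1) X) ≤ ∑ n ∈ Icc 1 ⌊X⌋₊, #(tuplesProdLe k (X / n)) := by
  classical
  calc #(tuplesProdLe (k + 1) X)
      ≤ #((Icc 1 ⌊X⌋₊).biUnion fun n => (tuplesProdLe k (X / n)).image
          (Fin.cons (α := fun _ => ℕ) n)) := by
        refine card_le_card fun f hf => ?_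
        obtain ⟨hpos, hprod⟩ := mem_tuplesProdLe.mp hf
        rw [Fin.prod_univ_succ] at hprod
        have h0 : (0 : ℝ) < f 0 := by exact_mod_cast hpos 0
        simp only [mem_biUnion, mem_image, mem_Icc]
        refine ⟨f 0, ⟨hpos 0, Nat.le_floor ((natCast_le_prod_natCast hpos 0).trans ?_)⟩,
          Fin.tail f, mem_tuplesProdLe.mpr ⟨fun j => hpos j.succ, ?_⟩, Fin.cons_self_tail f⟩
        · rwa [Fin.prod_univ_succ]
        · rwa [le_div_iff₀ h0, mul_comm]
    _ ≤ ∑ n ∈ Icc 1 ⌊X⌋₊, #(tuplesProdLe k (X / n)) :=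
        card_biUnion_le.trans (sum_le_sum fun _ _ => card_image_le)

lemma card_tuplesProdLe_le (k : ℕ) {X : ℝ} (hX : 1 ≤ X) :
    (#(tuplesProdLe k X) : ℝ) ≤ X * (1 + log X) ^ (k - 1) := by
  cases k with
  | zero =>
    calc (#(tuplesProdLe 0 X) : ℝ) ≤ 1 := by exact_mod_cast card_tuplesProdLe_zero_le X
      _ ≤ X * (1 + log X) ^ (0 - 1) := by simpa using hX
  | succ k =>
    rw [Nat.add_sub_cancel]
    induction k generalizing X with
    | zero =>
      calc (#(tuplesProdLe 1 X) : ℝ)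
          ≤ ∑ n ∈ Icc 1 ⌊X⌋₊, (#(tuplesProdLe 0 (X / n)) : ℝ) := by
            exact_mod_cast card_tuplesProdLe_succ_le 0 X
        _ ≤ ∑ n ∈ Icc 1 ⌊X⌋₊, (1 : ℝ) :=
            sum_le_sum fun n _ => by exact_mod_cast card_tuplesProdLe_zero_le _
        _ ≤ X * (1 + log X) ^ 0 := by simpa using Nat.floor_le (by linarith)
    | succ k ih =>
      have hlog : 0 ≤ log X := log_nonneg hX
      calc (#(tuplesProdLe (k + 2) X) : ℝ)
          ≤ ∑ n ∈ Icc 1 ⌊X⌋₊, (#(tuplesProdLe (k + 1) (X / n)) : ℝ) := by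
            exact_mod_cast card_tuplesProdLe_succ_le (k + 1) X
        _ ≤ ∑ n ∈ Icc 1 ⌊X⌋₊, X * (1 + log X) ^ k * (n : ℝ)⁻¹ := by
            refine sum_le_sum fun n hn => ?_
            have hn1 : (1 : ℝ) ≤ n := by exact_mod_cast (mem_Icc.mp hn).1
            have hnX : (n : ℝ) ≤ X := (Nat.le_floor_iff (by linarith)).mp (mem_Icc.mp hn).2
            have hXn : 1 ≤ X / n := (one_le_div (by linarith)).mpr hnX
            calc (#(tuplesProdLe (k + 1) (X / n)) : ℝ) ≤ X / n * (1 + log (X / n)) ^ k := ih hXn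
              _ ≤ X / n * (1 + log X) ^ k := by
                  gcongr
                  · linarith [log_nonneg hXn]
                  · exact div_le_self (by linarith) hn1
              _ = X * (1 + log X) ^ k * (n : ℝ)⁻¹ := by ring
        _ = X * (1 + log X) ^ k * ∑ n ∈ Icc 1 ⌊X⌋₊, (n : ℝ)⁻¹ := (mul_sum ..).symm
        _ ≤ X * (1 + log X) ^ k * (1 + log X) := by
            gcongr
            refine (sum_Icc_inv_le_one_add_log _).trans ?_
            gcongr
            · exact_mod_cast Nat.floor_pos.mpr hX
            · exact Nat.floor_le (by linarith)
        _ = X * (1 + log X) ^ (k + 1) := by ring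

lemma sum_tuplesProdLe_inv_sq_le (k : ℕ) (X : ℝ) :
    ∑ m ∈ tuplesProdLe k X, ((∏ j, (m j : ℝ)) ^ 2)⁻¹ ≤ 2 ^ k := by
  classical
  calc ∑ m ∈ tuplesProdLe k X, ((∏ j, (m j : ℝ)) ^ 2)⁻¹
      ≤ ∑ m ∈ Fintype.piFinset fun _ : Fin k => Icc 1 ⌊X⌋₊, ∏ j, ((m j : ℝ) ^ 2)⁻¹ := by
        simp only [← prod_pow, ← prod_inv_distrib]
        exact sum_le_sum_of_subset_of_nonneg (filter_subset _ _) fun _ _ _ => by positivity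
    _ = ∏ _j : Fin k, ∑ n ∈ Icc 1 ⌊X⌋₊, ((n : ℝ) ^ 2)⁻¹ := by rw [prod_univ_sum]
    _ ≤ ∏ _j : Fin k, (2 : ℝ) :=
        prod_le_prod (fun _ _ => sum_nonneg fun _ _ => by positivity)
          fun _ _ => sum_Icc_inv_sq_le_two _
    _ = 2 ^ k := by simp

/-- Common parts `m` and remainders `a`, `b` of pairs of tuples with products at most `X`. -/
noncomputable def sharedTriples (r k : ℕ) (X : ℝ) :
    Finset ((_ : Fin r → ℕ) × (Fin k → ℕ) × (Fin k → ℕ)) :=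
  (tuplesProdLe r X).sigma fun m =>
    tuplesProdLe k (X / ∏ j, (m j : ℝ)) ×ˢ tuplesProdLe k (X / ∏ j, (m j : ℝ))

lemma mk_mem_sharedTriples {r k : ℕ} {X : ℝ} {m : Fin r → ℕ} {a b : Fin k → ℕ}
    (hm : ∀ j, 1 ≤ m j) (ha : ∀ j, 1 ≤ a j) (hb : ∀ j, 1 ≤ b j)
    (hma : (∏ j, (m j : ℝ)) * ∏ j, (a j : ℝ) ≤ X) (hmb : (∏ j, (m j : ℝ)) * ∏ j, (b j : ℝ) ≤ X) :
    ⟨m, a, b⟩ ∈ sharedTriples r k X := by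
  have hm₀ : 0 < ∏ j, (m j : ℝ) := zero_lt_one.trans_le (one_le_prod_natCast hm)
  simp only [sharedTriples, mem_sigma, mem_product, mem_tuplesProdLe, le_div_iff₀ hm₀]
  refine ⟨⟨hm, (le_mul_of_one_le_right hm₀.le (one_le_prod_natCast ha)).trans hma⟩,
    ⟨ha, ?_⟩, hb, ?_⟩ <;> linarith

lemma card_sharedTriples_le (r k : ℕ) (X : ℝ) :
    (#(sharedTriples r k X) : ℝ) ≤ 2 ^ r * X ^ 2 * (1 + log X) ^ (2 * (k - 1)) := by
  set L := (1 + log X) ^ (k - 1)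
  calc (#(sharedTriples r k X) : ℝ)
      = ∑ m ∈ tuplesProdLe r X, (#(tuplesProdLe k (X / ∏ j, (m j : ℝ))) : ℝ) ^ 2 := by
        simp [sharedTriples, card_sigma, card_product, sq]
    _ ≤ ∑ m ∈ tuplesProdLe r X, (X * L) ^ 2 * ((∏ j, (m j : ℝ)) ^ 2)⁻¹ := by
        refine sum_le_sum fun m hm => ?_
        obtain ⟨hpos, hprod⟩ := mem_tuplesProdLe.mp hm
        set P := ∏ j, (m j : ℝ)
        have hP : 1 ≤ P := one_le_prod_natCast hpos
        have hXP : 1 ≤ X / P := (one_le_div (by linarith)).mpr hprod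
        have hcard : (#(tuplesProdLe k (X / P)) : ℝ) ≤ X / P * L := by
          refine (card_tuplesProdLe_le k hXP).trans ?_
          simp only [L]
          gcongr
          · linarith [log_nonneg hXP]
          · exact div_le_self (by linarith) hP
        calc (#(tuplesProdLe k (X / P)) : ℝ) ^ 2 ≤ (X / P * L) ^ 2 := by gcongr
          _ = (X * L) ^ 2 * (P ^ 2)⁻¹ := by ring
    _ = (X * L) ^ 2 * ∑ m ∈ tuplesProdLe r X, ((∏ j, (m j : ℝ)) ^ 2)⁻¹ := (mul_sum ..).symm
    _ ≤ (X * L) ^ 2 * 2 ^ r := by gcongr; exact sum_tuplesProdLe_inv_sq_le r X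
    _ = 2 ^ r * X ^ 2 * (1 + log X) ^ (2 * (k - 1)) := by rw [mul_comm 2 (k - 1), pow_mul]; ring

lemma prod_orderEmbOfFin {α M : Type*} [LinearOrder α] [CommMonoid M] (s : Finset α) {n : ℕ}
    (h : #s = n) (g : α → M) : ∏ j, g (s.orderEmbOfFin h j) = ∏ x ∈ s, g x := by
  conv_rhs => rw [← map_orderEmbOfFin_univ s h, prod_map]
  rfl

lemma exists_mem_sharedTriples {p r : ℕ} {X : ℝ} {s t : Finset ℕ}
    (hs : #s = p) (ht : #t = p) (hst : #(s ∩ t) = r)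
    (hs₁ : ∀ x ∈ s, 1 ≤ x) (ht₁ : ∀ x ∈ t, 1 ≤ x)
    (hsX : ∏ x ∈ s, (x : ℝ) ≤ X) (htX : ∏ x ∈ t, (x : ℝ) ≤ X) :
    ∃ z ∈ sharedTriples r (p - r) X,
      (univ.image z.1 ∪ univ.image z.2.1, univ.image z.1 ∪ univ.image z.2.2) = (s, t) := by
  have hA : #(s \ t) = p - r := by rw [card_sdiff, inter_comm, hs, hst]
  have hB : #(t \ s) = p - r := by rw [card_sdiff, ht, hst]
  refine ⟨⟨(s ∩ t).orderEmbOfFin hst, (s \ t).orderEmbOfFin hA, (t \ s).orderEmbOfFin hB⟩,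
    mk_mem_sharedTriples ?_ ?_ ?_ ?_ ?_, ?_⟩
  · exact fun j => hs₁ _ (mem_of_mem_inter_left (orderEmbOfFin_mem _ hst j))
  · exact fun j => hs₁ _ (mem_sdiff.mp (orderEmbOfFin_mem _ hA j)).1
  · exact fun j => ht₁ _ (mem_sdiff.mp (orderEmbOfFin_mem _ hB j)).1
  · rwa [prod_orderEmbOfFin, prod_orderEmbOfFin, prod_inter_mul_prod_sdiff]
  · rwa [prod_orderEmbOfFin, prod_orderEmbOfFin, inter_comm, prod_inter_mul_prod_sdiff]
  · simp only [image_orderEmbOfFin_univ]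
    exact Prod.ext (sup_inf_sdiff s t) (inter_comm s t ▸ sup_inf_sdiff t s)

lemma StrictMono.image_univ_inj {ι α : Type*} [Fintype ι] [LinearOrder ι] [Preorder α]
    [DecidableEq α] {f g : ι → α} (hf : StrictMono f) (hg : StrictMono g) :
    univ.image f = univ.image g ↔ f = g := by
  rw [← hf.range_inj hg, ← coe_inj, coe_image, coe_image, coe_univ, Set.image_univ, Set.image_univ]

lemma natCard_overlapPairs_le (p r w : ℕ) (X : ℝ) :
    Nat.card {q : (Fin p → ℕ) × (Fin p → ℕ) //
        StrictMono q.1 ∧ StrictMono q.2 ∧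
        (∀ j, 0 < q.1 j ∧ q.1 j ≤ w) ∧ (∀ j, 0 < q.2 j ∧ q.2 j ≤ w) ∧
        (∏ j, (q.1 j : ℝ)) ≤ X ∧ (∏ j, (q.2 j : ℝ)) ≤ X ∧
        (Set.range q.1 ∩ Set.range q.2).ncard = r} ≤ #(sharedTriples r (p - r) X) := by
  let unions (z : (_ : Fin r → ℕ) × (Fin (p - r) → ℕ) × (Fin (p - r) → ℕ)) :
      Finset ℕ × Finset ℕ :=
    (univ.image z.1 ∪ univ.image z.2.1, univ.image z.1 ∪ univ.image z.2.2)
  refine (Nat.card_le_card_of_injective (fun q => (⟨(univ.image q.1.1, univ.image q.1.2), ?_⟩ :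
    (sharedTriples r (p - r) X).image unions)) ?_).trans
    ((Nat.card_eq_finsetCard _).trans_le card_image_le)
  · obtain ⟨⟨q₁, q₂⟩, hq₁, hq₂, hw₁, hw₂, hX₁, hX₂, hr⟩ := q
    obtain ⟨z, hz, hzq⟩ := exists_mem_sharedTriples (p := p) (r := r) (X := X)
      ((card_image_of_injective _ hq₁.injective).trans (card_fin p))
      ((card_image_of_injective _ hq₂.injective).trans (card_fin p))
      (by rw [← hr, ← Set.ncard_coe_finset, coe_inter, coe_image, coe_image, coe_univ,
        Set.image_univ, Set.image_univ])
      (forall_mem_image.mpr fun j _ => (hw₁ j).1) (forall_mem_image.mpr fun j _ => (hw₂ j).1)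
      (by rwa [prod_image fun a _ b _ h => hq₁.injective h])
      (by rwa [prod_image fun a _ b _ h => hq₂.injective h])
    exact mem_image.mpr ⟨z, hz, hzq⟩
  · rintro ⟨⟨q₁, q₂⟩, hq₁, hq₂, _⟩ ⟨⟨q₁', q₂'⟩, hq₁', hq₂', _⟩ h
    simp only [Subtype.mk.injEq, Prod.mk.injEq, hq₁.image_univ_inj hq₁',
      hq₂.image_univ_inj hq₂'] at h
    exact Subtype.ext (Prod.ext h.1 h.2)

lemma abs_one_add_log_mul_le {K R : ℝ} (hK : 0 < K) (hR : 2 ≤ R) :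
    |1 + log (K * R)| ≤ (1 + (1 + |log K|) / log 2) * log R := by
  have hlog2 : 0 < log 2 := log_pos one_lt_two
  have hlogR : log 2 ≤ log R := log_le_log two_pos hR
  have hK' : 1 + |log K| ≤ (1 + |log K|) / log 2 * log R := by
    rw [div_mul_eq_mul_div, le_div_iff₀ hlog2]
    nlinarith [abs_nonneg (log K)]
  rw [log_mul hK.ne' (by linarith), add_mul, one_mul, abs_le]
  constructor <;> linarith [neg_abs_le (log K), le_abs_self (log K)]

theorem pair_count_bound_sq_general (p r : ℕ) (K : ℝ) (hK : 0 < K) :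
    ∃ C : ℝ, 0 < C ∧ ∀ R : ℝ, 2 ≤ R → ∀ w : ℕ, 1 ≤ w →
      (Nat.card {q : (Fin p → ℕ) × (Fin p → ℕ) //
          StrictMono q.1 ∧ StrictMono q.2 ∧
          (∀ j, 0 < q.1 j ∧ q.1 j ≤ w) ∧ (∀ j, 0 < q.2 j ∧ q.2 j ≤ w) ∧
          (∏ j, (q.1 j : ℝ)) ≤ K * R ∧ (∏ j, (q.2 j : ℝ)) ≤ K * R ∧
          (Set.range q.1 ∩ Set.range q.2).ncard = r} : ℝ)
        ≤ C * R ^ 2 * (Real.log R) ^ (2 * (p - r - 1)) := by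
  set c := 1 + (1 + |log K|) / log 2
  refine ⟨2 ^ r * K ^ 2 * c ^ (2 * (p - r - 1)), by positivity, fun R hR w _ => ?_⟩
  calc _ ≤ (#(sharedTriples r (p - r) (K * R)) : ℝ) := by
        exact_mod_cast natCard_overlapPairs_le p r w (K * R)
    _ ≤ 2 ^ r * (K * R) ^ 2 * (1 + log (K * R)) ^ (2 * (p - r - 1)) :=
        card_sharedTriples_le r (p - r) (K * R)
    _ ≤ 2 ^ r * (K * R) ^ 2 * (c * log R) ^ (2 * (p - r - 1)) := by
        rw [← (even_two_mul _).pow_abs]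
        gcongr
        exact abs_one_add_log_mul_le hK hR
    _ = 2 ^ r * K ^ 2 * c ^ (2 * (p - r - 1)) * R ^ 2 * log R ^ (2 * (p - r - 1)) := by
        rw [mul_pow, mul_pow]
        ring

/-- Counting bound: the number of pairs of increasing `p`-tuples with components
in `[1,w]`, product at most `K·R`, sharing exactly `r` common components, is at
most `C R² (log R)^{2(p-r-1)}`, uniformly in `w`. -/
theorem pair_count_bound_sq (p r : ℕ) (hp : 2 ≤ p) (hr1 : 1 ≤ r)
    (hr2 : r ≤ p - 1) (K : ℝ) (hK : 0 < K) :
    ∃ C : ℝ, 0 < C ∧ ∀ R : ℝ, 2 ≤ R → ∀ w : ℕ, 1 ≤ w →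
      (Nat.card {q : (Fin p → ℕ) × (Fin p → ℕ) //
          StrictMono q.1 ∧ StrictMono q.2 ∧
          (∀ j, 0 < q.1 j ∧ q.1 j ≤ w) ∧ (∀ j, 0 < q.2 j ∧ q.2 j ≤ w) ∧
          (∏ j, (q.1 j : ℝ)) ≤ K * R ∧ (∏ j, (q.2 j : ℝ)) ≤ K * R ∧
          (Set.range q.1 ∩ Set.range q.2).ncard = r} : ℝ)
        ≤ C * R ^ 2 * (Real.log R) ^ (2 * (p - r - 1)) :=
  pair_count_bound_sq_general p r K hK
end

section
/- Let $p \ge 2$, $1 \le r \le p-1$, and $K > 0$. There is a constant $C$ such that for all $R \ge 2$ and all integers $w \ge 2$, the number of pairs $({\boldsymbol i}, {\boldsymbol i}')$ of tuples in $\mathcal{H} = \{(i_1,\dots,i_p)\in\mathbb{N}^p : i_1 < \cdots < i_p \le w,\ i_1\cdots i_p \le KR\}$ sharing exactly $r$ common components is at most $C\, R\, w^{p-r} (\log R)^{r-1}$. -/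
/-!
A pair `(A, B)` of `p`-sets is determined by `C = A ∩ B`, `D = A \ B` and `E = B \ A`, and the
two conditions `∏ C * ∏ D ≤ Y`, `∏ C * ∏ E ≤ Y` force `∏ C ≤ Y / √(∏ D * ∏ E)`. The number of
`r`-sets, or even `r`-tuples, of positive integers with product at most `X` is at most
`X (1 + log⁺ X) ^ (r - 1)`: split off the first entry `a ≤ X` and sum the harmonic series. The
weight `(∏ D * ∏ E)^(-1/2)` then factors, and `∑ D, (∏ D)^(-1/2) ≤ (∑_{e ≤ w} e^(-1/2)) ^ (p - r)`
with `∑_{e ≤ w} e^(-1/2) ≤ 2 √w`.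
-/

open Finset Real

noncomputable def boundedProductTuples (k M : ℕ) (Y : ℝ) : Finset (Fin k → ℕ) :=
  {f ∈ Fintype.piFinset fun _ ↦ Icc 1 M | ∏ j, (f j : ℝ) ≤ Y}

lemma one_le_prod_of_mem_piFinset_Icc {k M : ℕ} {f : Fin k → ℕ}
    (hf : f ∈ Fintype.piFinset fun _ ↦ Icc 1 M) : (1 : ℝ) ≤ ∏ j, (f j : ℝ) :=
  one_le_prod fun j _ ↦ by exact_mod_cast (mem_Icc.1 (Fintype.mem_piFinset.1 hf j)).1

lemma card_boundedProductTuples_zero_le (M : ℕ) (Y : ℝ) : #(boundedProductTuples 0 M Y) ≤ 1 :=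
  (card_filter_le _ _).trans (by simp)

lemma card_boundedProductTuples_succ_le (k M : ℕ) (Y : ℝ) :
    #(boundedProductTuples (k + 1) M Y) ≤
      ∑ a ∈ Icc 1 ⌊Y⌋₊, #(boundedProductTuples k M (Y / a)) := by
  rw [← card_sigma]
  refine card_le_card_of_injOn (fun f ↦ ⟨f 0, Fin.tail f⟩) (fun f hf ↦ ?_) ?_
  · obtain ⟨hfM, hfY⟩ := mem_filter.1 (mem_coe.1 hf)
    have hsplit : ∏ j, (f j : ℝ) = f 0 * ∏ j, (Fin.tail f j : ℝ) := Fin.prod_univ_succ _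
    have hf0 : (1 : ℝ) ≤ f 0 := by exact_mod_cast (mem_Icc.1 (Fintype.mem_piFinset.1 hfM 0)).1
    have htailM : Fin.tail f ∈ Fintype.piFinset fun _ ↦ Icc 1 M :=
      Fintype.mem_piFinset.2 fun j ↦ Fintype.mem_piFinset.1 hfM j.succ
    have htail := one_le_prod_of_mem_piFinset_Icc htailM
    refine mem_sigma.2
      ⟨mem_Icc.2 ⟨by exact_mod_cast hf0, Nat.le_floor ?_⟩, mem_filter.2 ⟨htailM, ?_⟩⟩
    · nlinarith
    · rw [le_div_iff₀ (by linarith), mul_comm, ← hsplit]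
      exact hfY
  · rintro f - g - hfg
    simp only [Sigma.mk.inj_iff, heq_eq_eq] at hfg
    rw [← Fin.cons_self_tail f, ← Fin.cons_self_tail g, hfg.1, hfg.2]

lemma card_boundedProductTuples_succ_le_mul_pow (k M : ℕ) {Y : ℝ} (hY : 0 ≤ Y) :
    (#(boundedProductTuples (k + 1) M Y) : ℝ) ≤ Y * (1 + log⁺ Y) ^ k := by
  induction k generalizing Y with
  | zero =>
    calc (#(boundedProductTuples 1 M Y) : ℝ) ≤ ∑ _a ∈ Icc 1 ⌊Y⌋₊, (1 : ℝ) := by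
          exact_mod_cast (card_boundedProductTuples_succ_le 0 M Y).trans
            (sum_le_sum fun a _ ↦ card_boundedProductTuples_zero_le M _)
      _ = ⌊Y⌋₊ := by simp
      _ ≤ Y * (1 + log⁺ Y) ^ 0 := by simpa using Nat.floor_le hY
  | succ k ih =>
    have hterm : ∀ a ∈ Icc 1 ⌊Y⌋₊, (#(boundedProductTuples (k + 1) M (Y / a)) : ℝ) ≤
        Y * (1 + log⁺ Y) ^ k * (a : ℝ)⁻¹ := by
      intro a ha
      have ha1 : (1 : ℝ) ≤ a := by exact_mod_cast (mem_Icc.1 ha).1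
      calc _ ≤ Y / a * (1 + log⁺ (Y / a)) ^ k := ih (by positivity)
        _ ≤ Y / a * (1 + log⁺ Y) ^ k := by
          have := posLog_le_posLog (by positivity) (div_le_self hY ha1)
          have := posLog_nonneg (x := Y / a)
          gcongr
        _ = _ := by ring
    have hharmonic : ∑ a ∈ Icc 1 ⌊Y⌋₊, (a : ℝ)⁻¹ ≤ 1 + log⁺ Y := by
      have h := harmonic_le_one_add_log ⌊Y⌋₊
      simp only [harmonic_eq_sum_Icc, Rat.cast_sum, Rat.cast_inv, Rat.cast_natCast,
        ← log_of_nat_eq_posLog] at h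
      linarith [posLog_le_posLog (Nat.cast_nonneg _) (Nat.floor_le hY)]
    calc (#(boundedProductTuples (k + 2) M Y) : ℝ)
        ≤ ∑ a ∈ Icc 1 ⌊Y⌋₊, (#(boundedProductTuples (k + 1) M (Y / a)) : ℝ) := by
          exact_mod_cast card_boundedProductTuples_succ_le (k + 1) M Y
      _ ≤ ∑ a ∈ Icc 1 ⌊Y⌋₊, Y * (1 + log⁺ Y) ^ k * (a : ℝ)⁻¹ := sum_le_sum hterm
      _ ≤ Y * (1 + log⁺ Y) ^ k * (1 + log⁺ Y) := by
          have := posLog_nonneg (x := Y)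
          rw [← mul_sum]
          gcongr
      _ = Y * (1 + log⁺ Y) ^ (k + 1) := by ring

theorem card_boundedProductTuples_le (k M : ℕ) {Y : ℝ} (hY : 0 ≤ Y) :
    (#(boundedProductTuples k M Y) : ℝ) ≤ Y * (1 + log⁺ Y) ^ (k - 1) := by
  cases k with
  | succ k => exact card_boundedProductTuples_succ_le_mul_pow k M hY
  | zero =>
    rcases lt_or_ge Y 1 with hY1 | hY1
    · have : boundedProductTuples 0 M Y = ∅ := by simp [boundedProductTuples, hY1]
      simp [this, hY]
    · have := card_boundedProductTuples_zero_le M Y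
      have : (#(boundedProductTuples 0 M Y) : ℝ) ≤ 1 := by exact_mod_cast this
      simpa using this.trans hY1

theorem sum_powersetCard_le_sum_piFinset {α β M : Type*} [LinearOrder α] [CommMonoid β]
    [AddCommMonoid M] [PartialOrder M] [IsOrderedAddMonoid M]
    (S : Finset α) (k : ℕ) (f : α → β) (G : β → M) (hG : ∀ x, 0 ≤ G x) :
    ∑ C ∈ powersetCard k S, G (∏ c ∈ C, f c) ≤
      ∑ g ∈ Fintype.piFinset fun _ : Fin k ↦ S, G (∏ j, f (g j)) := by
  classical
  set T := {g ∈ Fintype.piFinset fun _ : Fin k ↦ S | Function.Injective g}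
  have hsurj : powersetCard k S ⊆ T.image fun g ↦ univ.image g := by
    intro C hC
    obtain ⟨hCS, hCk⟩ := mem_powersetCard.1 hC
    refine mem_image.2 ⟨C.orderEmbOfFin hCk, mem_filter.2 ⟨?_, (C.orderEmbOfFin hCk).injective⟩,
      C.image_orderEmbOfFin_univ hCk⟩
    exact Fintype.mem_piFinset.2 fun j ↦ hCS (C.orderEmbOfFin_mem hCk j)
  calc ∑ C ∈ powersetCard k S, G (∏ c ∈ C, f c)
      ≤ ∑ C ∈ T.image fun g ↦ univ.image g, G (∏ c ∈ C, f c) :=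
        sum_le_sum_of_subset_of_nonneg hsurj fun _ _ _ ↦ hG _
    _ ≤ ∑ g ∈ T, G (∏ c ∈ univ.image g, f c) := sum_image_le_of_nonneg fun _ _ ↦ hG _
    _ = ∑ g ∈ T, G (∏ j, f (g j)) :=
        sum_congr rfl fun g hg ↦ by rw [prod_image fun i _ j _ h ↦ (mem_filter.1 hg).2 h]
    _ ≤ _ := sum_le_sum_of_subset_of_nonneg (filter_subset _ _) fun _ _ _ ↦ hG _

theorem card_filter_powersetCard_Icc_prod_le (k M : ℕ) {Y : ℝ} (hY : 0 ≤ Y) :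
    (#{C ∈ powersetCard k (Icc 1 M) | ∏ c ∈ C, ((c : ℕ) : ℝ) ≤ Y} : ℝ) ≤
      Y * (1 + log⁺ Y) ^ (k - 1) := by
  refine le_trans ?_ (card_boundedProductTuples_le k M hY)
  have := sum_powersetCard_le_sum_piFinset (Icc 1 M) k (fun c : ℕ ↦ (c : ℝ))
    (fun x ↦ if x ≤ Y then 1 else 0) fun _ ↦ Nat.zero_le _
  simp only [boundedProductTuples, card_filter]
  exact_mod_cast this

lemma le_div_sqrt_mul_of_mul_le {x a b Y : ℝ} (hx : 0 ≤ x) (ha : 0 < a) (hb : 0 < b)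
    (hxa : x * a ≤ Y) (hxb : x * b ≤ Y) : x ≤ Y / √(a * b) := by
  have hY : 0 ≤ Y := (by positivity : 0 ≤ x * a).trans hxa
  rw [le_div_iff₀ (by positivity)]
  calc x * √(a * b) = √(x * a * (x * b)) := by
        rw [show x * a * (x * b) = x ^ 2 * (a * b) by ring, sqrt_mul (sq_nonneg x), sqrt_sq hx]
    _ ≤ √(Y * Y) := sqrt_le_sqrt (mul_le_mul hxa hxb (by positivity) hY)
    _ = Y := sqrt_mul_self hY

theorem card_filter_powersetCard_Icc_prod_mul_le (r w : ℕ) {Y a b : ℝ} (hY : 0 ≤ Y)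
    (ha : 1 ≤ a) (hb : 1 ≤ b) :
    (#{C ∈ powersetCard r (Icc 1 w) |
        (∏ c ∈ C, ((c : ℕ) : ℝ)) * a ≤ Y ∧ (∏ c ∈ C, ((c : ℕ) : ℝ)) * b ≤ Y} : ℝ) ≤
      Y * (1 + log⁺ Y) ^ (r - 1) * ((√a)⁻¹ * (√b)⁻¹) := by
  have hab : 1 ≤ √(a * b) := one_le_sqrt.2 (one_le_mul_of_one_le_of_one_le ha hb)
  have hY' : Y / √(a * b) ≤ Y := div_le_self hY hab
  have hsub : {C ∈ powersetCard r (Icc 1 w) |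
        (∏ c ∈ C, ((c : ℕ) : ℝ)) * a ≤ Y ∧ (∏ c ∈ C, ((c : ℕ) : ℝ)) * b ≤ Y} ⊆
      {C ∈ powersetCard r (Icc 1 w) | ∏ c ∈ C, ((c : ℕ) : ℝ) ≤ Y / √(a * b)} :=
    monotone_filter_right _ fun C _ hC ↦
      le_div_sqrt_mul_of_mul_le (prod_nonneg fun _ _ ↦ by positivity) (by linarith)
        (by linarith) hC.1 hC.2
  have := posLog_le_posLog (by positivity) hY'
  have := posLog_nonneg (x := Y / √(a * b))
  calc _ ≤ (#{C ∈ powersetCard r (Icc 1 w) | ∏ c ∈ C, ((c : ℕ) : ℝ) ≤ Y / √(a * b)} : ℝ) := by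
        exact_mod_cast card_le_card hsub
    _ ≤ Y / √(a * b) * (1 + log⁺ (Y / √(a * b))) ^ (r - 1) :=
        card_filter_powersetCard_Icc_prod_le r w (by positivity)
    _ ≤ Y / √(a * b) * (1 + log⁺ Y) ^ (r - 1) := by gcongr
    _ = _ := by
        rw [sqrt_mul (by positivity)]
        ring

lemma sum_Icc_inv_sqrt_le (w : ℕ) : ∑ e ∈ Icc 1 w, (√(e : ℕ))⁻¹ ≤ 2 * √w := by
  induction w with
  | zero => simp
  | succ w ih =>
    rw [sum_Icc_succ_top (by omega)]
    have hw : 0 < √((w : ℝ) + 1) := sqrt_pos.2 (by positivity)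
    have hw2 := sq_sqrt (by positivity : (0 : ℝ) ≤ w + 1)
    have hw1 := sq_sqrt (Nat.cast_nonneg w : (0 : ℝ) ≤ w)
    have hstep : (√((w : ℝ) + 1))⁻¹ ≤ 2 * (√((w : ℝ) + 1) - √w) := by
      rw [inv_le_iff_one_le_mul₀' hw]
      nlinarith [sq_nonneg (√((w : ℝ) + 1) - √w)]
    push_cast
    linarith

lemma sum_powersetCard_Icc_inv_sqrt_prod_le (k w : ℕ) :
    ∑ D ∈ powersetCard k (Icc 1 w), (√(∏ d ∈ D, (d : ℝ)))⁻¹ ≤ (2 * √w) ^ k := by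
  calc ∑ D ∈ powersetCard k (Icc 1 w), (√(∏ d ∈ D, (d : ℝ)))⁻¹
      ≤ ∑ g ∈ Fintype.piFinset fun _ : Fin k ↦ Icc 1 w, (√(∏ j, (g j : ℝ)))⁻¹ :=
        sum_powersetCard_le_sum_piFinset _ k (fun c : ℕ ↦ (c : ℝ)) (fun x ↦ (√x)⁻¹)
          fun _ ↦ by positivity
    _ = (∑ e ∈ Icc 1 w, (√(e : ℕ))⁻¹) ^ k := by
        rw [← Fin.prod_const, prod_univ_sum]
        simp only [sqrt_prod _ fun _ _ ↦ Nat.cast_nonneg _, prod_inv_distrib]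
    _ ≤ (2 * √w) ^ k := by
        gcongr
        exact sum_Icc_inv_sqrt_le w

noncomputable def overlappingPairs (S : Finset ℕ) (p r : ℕ) (Y : ℝ) :
    Finset (Finset ℕ × Finset ℕ) :=
  {AB ∈ powersetCard p S ×ˢ powersetCard p S |
    ∏ a ∈ AB.1, ((a : ℕ) : ℝ) ≤ Y ∧ ∏ b ∈ AB.2, ((b : ℕ) : ℝ) ≤ Y ∧ #(AB.1 ∩ AB.2) = r}

theorem card_strictMono_pairs_le_card_overlappingPairs (p r w : ℕ) (Y : ℝ) :
    Nat.card {q : (Fin p → ℕ) × (Fin p → ℕ) //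
        StrictMono q.1 ∧ StrictMono q.2 ∧
        (∀ j, 0 < q.1 j ∧ q.1 j ≤ w) ∧ (∀ j, 0 < q.2 j ∧ q.2 j ≤ w) ∧
        (∏ j, (q.1 j : ℝ)) ≤ Y ∧ (∏ j, (q.2 j : ℝ)) ≤ Y ∧
        (Set.range q.1 ∩ Set.range q.2).ncard = r} ≤
      #(overlappingPairs (Icc 1 w) p r Y) := by
  have hcoe : ∀ f : Fin p → ℕ, ((univ.image f : Finset ℕ) : Set ℕ) = Set.range f := by simp
  have hmem : ∀ {f : Fin p → ℕ}, StrictMono f → (∀ j, 0 < f j ∧ f j ≤ w) →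
      univ.image f ∈ powersetCard p (Icc 1 w) := fun hf hfw ↦ by
    refine mem_powersetCard.2 ⟨fun a ha ↦ ?_, ?_⟩
    · obtain ⟨j, -, rfl⟩ := mem_image.1 ha
      exact mem_Icc.2 (hfw j)
    · rw [card_image_of_injective _ hf.injective, card_univ, Fintype.card_fin]
  have hprod : ∀ {f : Fin p → ℕ}, StrictMono f →
      ∏ a ∈ univ.image f, (a : ℝ) = ∏ j, (f j : ℝ) :=
    fun hf ↦ prod_image fun i _ j _ h ↦ hf.injective h
  rw [← Nat.card_eq_finsetCard]
  refine Nat.card_le_card_of_injective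
    (fun q ↦ ⟨(univ.image q.1.1, univ.image q.1.2), ?_⟩) ?_
  · obtain ⟨⟨f, g⟩, hf, hg, hfw, hgw, hfY, hgY, hr⟩ := q
    refine mem_filter.2 ⟨mem_product.2 ⟨hmem hf hfw, hmem hg hgw⟩, ?_, ?_, ?_⟩
    · rwa [hprod hf]
    · rwa [hprod hg]
    · rw [← Set.ncard_coe_finset, coe_inter, hcoe, hcoe, hr]
  · intro q q' h
    obtain ⟨⟨f, g⟩, hf, hg, _⟩ := q
    obtain ⟨⟨f', g'⟩, hf', hg', _⟩ := q'
    simp only [Subtype.mk.injEq, Prod.mk.injEq] at h ⊢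
    rw [← hf.range_inj hf', ← hg.range_inj hg', ← hcoe, ← hcoe, ← hcoe g, ← hcoe g', h.1, h.2]
    exact ⟨rfl, rfl⟩

theorem card_overlappingPairs_le_sum (S : Finset ℕ) (p r : ℕ) (Y : ℝ) :
    #(overlappingPairs S p r Y) ≤
      ∑ DE ∈ powersetCard (p - r) S ×ˢ powersetCard (p - r) S,
        #{C ∈ powersetCard r S | (∏ c ∈ C, ((c : ℕ) : ℝ)) * ∏ d ∈ DE.1, ((d : ℕ) : ℝ) ≤ Y ∧
          (∏ c ∈ C, ((c : ℕ) : ℝ)) * ∏ e ∈ DE.2, ((e : ℕ) : ℝ) ≤ Y} := by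
  rw [← card_sigma]
  refine card_le_card_of_injOn (fun AB ↦ ⟨(AB.1 \ AB.2, AB.2 \ AB.1), AB.1 ∩ AB.2⟩)
    (fun AB hAB ↦ ?_) ?_
  · obtain ⟨A, B⟩ := AB
    simp only [overlappingPairs, coe_filter, mem_product, mem_powersetCard,
      Set.mem_ofPred_eq] at hAB
    obtain ⟨⟨⟨hAS, hA⟩, hBS, hB⟩, hAY, hBY, hAB⟩ := hAB
    simp only [mem_coe, mem_sigma, mem_product, mem_powersetCard, mem_filter]
    refine ⟨⟨⟨sdiff_subset.trans hAS, ?_⟩, sdiff_subset.trans hBS, ?_⟩,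
      ⟨inter_subset_left.trans hAS, hAB⟩, ?_, ?_⟩
    · rw [card_sdiff, inter_comm, hA, hAB]
    · rw [card_sdiff, hB, hAB]
    · rwa [prod_inter_mul_prod_sdiff]
    · rwa [inter_comm, prod_inter_mul_prod_sdiff]
  · rintro ⟨A, B⟩ - ⟨A', B'⟩ - h
    simp only [Sigma.mk.inj_iff, Prod.mk.injEq, heq_eq_eq] at h
    obtain ⟨⟨hD, hE⟩, hC⟩ := h
    have hA : A = A' := by rw [← sdiff_union_inter A B, hD, hC, sdiff_union_inter]
    have hB : B = B' := by
      rw [← sdiff_union_inter B A, hE, inter_comm, hC, inter_comm, sdiff_union_inter]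
    rw [hA, hB]

theorem card_overlapping_strictMono_pairs_le (p r w : ℕ) {Y : ℝ} (hY : 0 ≤ Y) :
    (Nat.card {q : (Fin p → ℕ) × (Fin p → ℕ) //
        StrictMono q.1 ∧ StrictMono q.2 ∧
        (∀ j, 0 < q.1 j ∧ q.1 j ≤ w) ∧ (∀ j, 0 < q.2 j ∧ q.2 j ≤ w) ∧
        (∏ j, (q.1 j : ℝ)) ≤ Y ∧ (∏ j, (q.2 j : ℝ)) ≤ Y ∧
        (Set.range q.1 ∩ Set.range q.2).ncard = r} : ℝ) ≤
      Y * (1 + log⁺ Y) ^ (r - 1) * (4 ^ (p - r) * (w : ℝ) ^ (p - r)) := by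
  set m := p - r
  set P := powersetCard m (Icc 1 w)
  have hprod : ∀ D ∈ P, (1 : ℝ) ≤ ∏ d ∈ D, (d : ℝ) := fun D hD ↦ one_le_prod fun d hd ↦ by
    exact_mod_cast (mem_Icc.1 ((mem_powersetCard.1 hD).1 hd)).1
  have hL : 0 ≤ Y * (1 + log⁺ Y) ^ (r - 1) := by
    have := posLog_nonneg (x := Y)
    positivity
  calc (Nat.card _ : ℝ)
      ≤ #(overlappingPairs (Icc 1 w) p r Y) := by
        exact_mod_cast card_strictMono_pairs_le_card_overlappingPairs p r w Y
    _ ≤ ∑ DE ∈ P ×ˢ P, (#{C ∈ powersetCard r (Icc 1 w) |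
          (∏ c ∈ C, ((c : ℕ) : ℝ)) * ∏ d ∈ DE.1, ((d : ℕ) : ℝ) ≤ Y ∧
          (∏ c ∈ C, ((c : ℕ) : ℝ)) * ∏ e ∈ DE.2, ((e : ℕ) : ℝ) ≤ Y} : ℝ) := by
        exact_mod_cast card_overlappingPairs_le_sum (Icc 1 w) p r Y
    _ ≤ ∑ DE ∈ P ×ˢ P, Y * (1 + log⁺ Y) ^ (r - 1) *
          ((√(∏ d ∈ DE.1, (d : ℝ)))⁻¹ * (√(∏ e ∈ DE.2, (e : ℝ)))⁻¹) :=
        sum_le_sum fun DE hDE ↦ card_filter_powersetCard_Icc_prod_mul_le r w hY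
          (hprod _ (mem_product.1 hDE).1) (hprod _ (mem_product.1 hDE).2)
    _ = Y * (1 + log⁺ Y) ^ (r - 1) * (∑ D ∈ P, (√(∏ d ∈ D, (d : ℝ)))⁻¹) ^ 2 := by
        rw [← mul_sum, sum_product, sq, sum_mul_sum]
    _ ≤ Y * (1 + log⁺ Y) ^ (r - 1) * ((2 * √w) ^ m) ^ 2 := by
        gcongr
        exact sum_powersetCard_Icc_inv_sqrt_prod_le m w
    _ = Y * (1 + log⁺ Y) ^ (r - 1) * (4 ^ m * (w : ℝ) ^ m) := by
        rw [← pow_mul, mul_comm m, pow_mul, mul_pow, sq_sqrt (Nat.cast_nonneg w), mul_pow]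
        norm_num

theorem pair_count_bound_lin_general (p r : ℕ) (K : ℝ) (hK : 0 < K) :
    ∃ C : ℝ, 0 < C ∧ ∀ R : ℝ, 2 ≤ R → ∀ w : ℕ, 2 ≤ w →
      (Nat.card {q : (Fin p → ℕ) × (Fin p → ℕ) //
          StrictMono q.1 ∧ StrictMono q.2 ∧
          (∀ j, 0 < q.1 j ∧ q.1 j ≤ w) ∧ (∀ j, 0 < q.2 j ∧ q.2 j ≤ w) ∧
          (∏ j, (q.1 j : ℝ)) ≤ K * R ∧ (∏ j, (q.2 j : ℝ)) ≤ K * R ∧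
          (Set.range q.1 ∩ Set.range q.2).ncard = r} : ℝ)
        ≤ C * R * (w : ℝ) ^ (p - r) * (Real.log R) ^ (r - 1) := by
  have hlog2 : 0 < log 2 := log_pos one_lt_two
  have hK' := posLog_nonneg (x := K)
  set c := (1 + log⁺ K) / log 2 + 1
  refine ⟨4 ^ (p - r) * K * c ^ (r - 1), by positivity, fun R hR w _ ↦ ?_⟩
  have hlogR : log 2 ≤ log R := log_le_log two_pos hR
  have hlogKR : 1 + log⁺ (K * R) ≤ c * log R := by
    have hR' : log⁺ R = log R := posLog_eq_log (by rw [abs_of_pos (by linarith)]; linarith)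
    have : 1 + log⁺ K ≤ (1 + log⁺ K) / log 2 * log R := by
      rw [div_mul_eq_mul_div, le_div_iff₀ hlog2]
      gcongr
    linarith [posLog_mul (x := K) (y := R)]
  have := posLog_nonneg (x := K * R)
  calc _ ≤ K * R * (1 + log⁺ (K * R)) ^ (r - 1) * (4 ^ (p - r) * (w : ℝ) ^ (p - r)) :=
        card_overlapping_strictMono_pairs_le p r w (by positivity)
    _ ≤ K * R * (c * log R) ^ (r - 1) * (4 ^ (p - r) * (w : ℝ) ^ (p - r)) := by gcongr
    _ = _ := by rw [mul_pow]; ring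

/-- Counting bound: the number of pairs of increasing `p`-tuples with components
in `[1,w]`, product at most `K·R`, sharing exactly `r` common components, is at
most `C R w^{p-r} (log R)^{r-1}`. -/
theorem pair_count_bound_lin (p r : ℕ) (hp : 2 ≤ p) (hr1 : 1 ≤ r)
    (hr2 : r ≤ p - 1) (K : ℝ) (hK : 0 < K) :
    ∃ C : ℝ, 0 < C ∧ ∀ R : ℝ, 2 ≤ R → ∀ w : ℕ, 2 ≤ w →
      (Nat.card {q : (Fin p → ℕ) × (Fin p → ℕ) //
          StrictMono q.1 ∧ StrictMono q.2 ∧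
          (∀ j, 0 < q.1 j ∧ q.1 j ≤ w) ∧ (∀ j, 0 < q.2 j ∧ q.2 j ≤ w) ∧
          (∏ j, (q.1 j : ℝ)) ≤ K * R ∧ (∏ j, (q.2 j : ℝ)) ≤ K * R ∧
          (Set.range q.1 ∩ Set.range q.2).ncard = r} : ℝ)
        ≤ C * R * (w : ℝ) ^ (p - r) * (Real.log R) ^ (r - 1) :=
  pair_count_bound_lin_general p r K hK
end

section
/- Let $U_{1},\dots,U_{p}$ be i.i.d. uniform random variables on an interval $(a, w)$ with $0 < a < w$. Then for any $t>0$, $(w-a)^p\,\mathbb{P}(U_1\cdots U_p \le t) = \sum_{s=0}^{p}\binom{p}{s}(-1)^s\Big( t \sum_{j=1}^{p-1} \frac{(-1)^{j+1}}{(p-j)!}\big(\log\tfrac{t}{a^{p-s}w^s}\big)_+^{p-j} + (-1)^{p-1}\,(t - a^{p-s}w^s)_+ \Big)$. -/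
open MeasureTheory ProbabilityTheory Set

namespace Ishihara

/-- The inner bracket in Ishihara's formula. -/
noncomputable def B (p : ℕ) (τ c : ℝ) : ℝ :=
  τ * ∑ j ∈ Finset.Icc 1 (p - 1),
      ((-1 : ℝ) ^ (j + 1) / (Nat.factorial (p - j))) *
        (max (Real.log (τ / c)) 0) ^ (p - j)
    + (-1 : ℝ) ^ (p - 1) * max (τ - c) 0

/-- The polynomial part. -/
noncomputable def S (p : ℕ) (x : ℝ) : ℝ :=
  ∑ j ∈ Finset.Icc 1 (p - 1), ((-1 : ℝ) ^ (j + 1) / (Nat.factorial (p - j))) * x ^ (p - j)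

lemma B_of_le (p : ℕ) {τ c : ℝ} (hτ : 0 < τ) (h : τ ≤ c) : B p τ c = 0 := by
  have hc : 0 < c := lt_of_lt_of_le hτ h
  have hlog : Real.log (τ / c) ≤ 0 :=
    Real.log_nonpos (by positivity) ((div_le_one hc).2 h)
  have hmax : max (Real.log (τ / c)) 0 = 0 := max_eq_right hlog
  have hmax2 : max (τ - c) 0 = 0 := max_eq_right (by linarith)
  rw [B, hmax, hmax2]
  have : ∀ j ∈ Finset.Icc 1 (p - 1),
      ((-1 : ℝ) ^ (j + 1) / (Nat.factorial (p - j))) * (0:ℝ) ^ (p - j) = 0 := by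
    intro j hj
    simp only [Finset.mem_Icc] at hj
    rw [zero_pow (by omega)]
    ring
  rw [Finset.sum_congr rfl this]
  simp

lemma B_of_ge (p : ℕ) {τ c : ℝ} (hc : 0 < c) (h : c ≤ τ) :
    B p τ c = τ * S p (Real.log (τ / c)) + (-1 : ℝ) ^ (p - 1) * (τ - c) := by
  have hτ : 0 < τ := lt_of_lt_of_le hc h
  have hlog : 0 ≤ Real.log (τ / c) := Real.log_nonneg ((one_le_div hc).2 h)
  rw [B, S, max_eq_left hlog, max_eq_left (by linarith)]

lemma hasDerivAt_S (p : ℕ) (hp : 1 ≤ p) (x : ℝ) :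
    HasDerivAt (S (p + 1)) (S p x + (-1 : ℝ) ^ (p + 1)) x := by
  have h1 : S (p + 1) = fun x : ℝ =>
      ∑ j ∈ Finset.Icc 1 p, ((-1 : ℝ) ^ (j + 1) / (Nat.factorial (p + 1 - j))) * x ^ (p + 1 - j) := by
    funext y; simp [S]
  rw [h1]
  have h2 : ∀ j ∈ Finset.Icc 1 p,
      HasDerivAt (fun x : ℝ => ((-1 : ℝ) ^ (j + 1) / (Nat.factorial (p + 1 - j))) * x ^ (p + 1 - j))
        (((-1 : ℝ) ^ (j + 1) / (Nat.factorial (p + 1 - j))) * (((p + 1 - j : ℕ) : ℝ) * x ^ (p + 1 - j - 1))) x := by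
    intro j hj
    exact (hasDerivAt_pow (p + 1 - j) x).const_mul _
  have h3 := HasDerivAt.sum h2
  convert h3 using 1
  · rfl
  · rfl
  · ext y; rw [Finset.sum_apply]
  -- show S p x + (-1)^(p+1) = the sum of derivatives
  have key : ∀ j ∈ Finset.Icc 1 p,
      ((-1 : ℝ) ^ (j + 1) / (Nat.factorial (p + 1 - j))) * (((p + 1 - j : ℕ) : ℝ) * x ^ (p + 1 - j - 1))
        = ((-1 : ℝ) ^ (j + 1) / (Nat.factorial (p - j))) * x ^ (p - j) := by
    intro j hj
    simp only [Finset.mem_Icc] at hj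
    have hj2 : p + 1 - j = (p - j) + 1 := by omega
    rw [hj2, Nat.factorial_succ]
    have hfac : (0:ℝ) < (Nat.factorial (p - j) : ℝ) := by positivity
    have hpj : (0:ℝ) < ((p - j : ℕ) : ℝ) + 1 := by positivity
    push_cast
    field_simp
  rw [Finset.sum_congr rfl key]
  have hsplit : Finset.Icc 1 p = Finset.Icc 1 ((p-1) + 1) := by congr 1; omega
  rw [hsplit, Finset.sum_Icc_succ_top (by omega)]
  have hp1 : p - 1 + 1 = p := by omega
  rw [hp1]
  simp [S, Nat.sub_self]

lemma hasDerivAt_B (p : ℕ) (hp : 1 ≤ p) {t c v : ℝ} (ht : 0 < t) (hc : 0 < c) (hv : 0 < v)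
    (hvt : c * v < t) :
    HasDerivAt (fun v => B (p + 1) t (c * v)) (-(B p (t / v) c)) v := by
  set L : ℝ → ℝ := fun v => Real.log t - Real.log c - Real.log v with hL
  have hLder : HasDerivAt L (-v⁻¹) v := by
    have := (Real.hasDerivAt_log hv.ne').const_sub (Real.log t - Real.log c)
    convert this using 2 <;> ring
  have hSder := (hasDerivAt_S p hp (L v)).comp v hLder
  have hg : HasDerivAt (fun v => t * S (p + 1) (L v) + (-1 : ℝ) ^ p * (t - c * v))
      (t * ((S p (L v) + (-1 : ℝ) ^ (p + 1)) * (-v⁻¹)) + (-1 : ℝ) ^ p * (-c)) v := by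
    refine HasDerivAt.add (hSder.const_mul t) ?_
    have : HasDerivAt (fun v : ℝ => t - c * v) (-c) v := by
      simpa using ((hasDerivAt_id v).const_mul c).const_sub t
    exact this.const_mul _
  have heq : (fun v => B (p + 1) t (c * v)) =ᶠ[nhds v]
      (fun v => t * S (p + 1) (L v) + (-1 : ℝ) ^ p * (t - c * v)) := by
    have hopen : IsOpen {y : ℝ | 0 < y ∧ c * y < t} := by
      have : {y : ℝ | 0 < y ∧ c * y < t} = Ioi 0 ∩ (fun y => c * y) ⁻¹' (Iio t) := by
        ext y; simp [Set.mem_setOf_eq]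
      rw [this]
      exact isOpen_Ioi.inter ((isOpen_Iio).preimage (by continuity))
    filter_upwards [hopen.mem_nhds ⟨hv, hvt⟩] with y hy
    obtain ⟨hy0, hyt⟩ := hy
    have hcy : 0 < c * y := mul_pos hc hy0
    rw [B_of_ge (p+1) hcy (le_of_lt hyt)]
    have hlog : Real.log (t / (c * y)) = L y := by
      rw [Real.log_div ht.ne' hcy.ne', Real.log_mul hc.ne' hy0.ne', hL]
      ring
    rw [hlog]
    norm_num
  have hmain := hg.congr_of_eventuallyEq heq
  convert hmain using 1
  · rfl
  · rfl
  have hcv : c < t / v := (lt_div_iff₀ hv).2 (by linarith [mul_comm c v])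
  rw [B_of_ge p hc hcv.le]
  have htv : 0 < t / v := div_pos ht hv
  have hlog2 : Real.log (t / v / c) = L v := by
    rw [Real.log_div (div_pos ht hv).ne' hc.ne', Real.log_div ht.ne' hv.ne', hL]
    ring
  rw [hlog2]
  have hpow : (-1 : ℝ) ^ (p - 1) = (-1 : ℝ) ^ (p + 1) := by
    have h2 : p + 1 = (p - 1) + 2 := by omega
    rw [h2, pow_add]
    norm_num
  rw [hpow]
  have hv' : v ≠ 0 := hv.ne'
  field_simp
  try ring




lemma continuousOn_B_right (p : ℕ) {t c : ℝ} (ht : 0 < t) (hc : 0 < c) :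
    ContinuousOn (fun v : ℝ => B p t (c * v)) (Ioi 0) := by
  have harg : ContinuousOn (fun v : ℝ => t / (c * v)) (Ioi 0) := by
    apply continuousOn_const.div (continuous_const.mul continuous_id).continuousOn
    intro v hv
    exact (mul_pos hc hv).ne'
  have hlog : ContinuousOn (fun v : ℝ => Real.log (t / (c * v))) (Ioi 0) := by
    apply harg.log
    intro v hv
    exact (div_pos ht (mul_pos hc hv)).ne'
  unfold B
  apply ContinuousOn.add
  · apply continuousOn_const.mul
    apply continuousOn_finset_sum
    intro j hj
    refine continuousOn_const.mul (ContinuousOn.pow ?_ _)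
    exact hlog.sup continuousOn_const
  · apply continuousOn_const.mul
    exact (continuousOn_const.sub (continuous_const.mul continuous_id).continuousOn).sup
      continuousOn_const

lemma continuousOn_B_left (p : ℕ) {t c : ℝ} (ht : 0 < t) (hc : 0 < c) :
    ContinuousOn (fun u : ℝ => B p (t / u) c) (Ioi 0) := by
  have hdiv : ContinuousOn (fun u : ℝ => t / u) (Ioi 0) :=
    continuousOn_const.div continuous_id.continuousOn (fun u hu => (hu : (0:ℝ) < u).ne')
  have harg : ContinuousOn (fun u : ℝ => t / u / c) (Ioi 0) :=
    hdiv.div continuousOn_const (fun u hu => hc.ne')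
  have hlog : ContinuousOn (fun u : ℝ => Real.log (t / u / c)) (Ioi 0) := by
    apply harg.log
    intro u hu
    exact (div_pos (div_pos ht hu) hc).ne'
  unfold B
  apply ContinuousOn.add
  · apply hdiv.mul
    apply continuousOn_finset_sum
    intro j hj
    refine continuousOn_const.mul (ContinuousOn.pow ?_ _)
    exact hlog.sup continuousOn_const
  · apply continuousOn_const.mul
    exact (hdiv.sub continuousOn_const).sup continuousOn_const

lemma integral_B (p : ℕ) (hp : 1 ≤ p) {t c a w : ℝ} (ht : 0 < t) (hc : 0 < c)
    (ha : 0 < a) (haw : a ≤ w) :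
    ∫ u in a..w, B p (t / u) c = B (p + 1) t (c * a) - B (p + 1) t (c * w) := by
  have hIcc : Icc a w ⊆ Ioi 0 := fun x hx => lt_of_lt_of_le ha hx.1
  have hcont : ContinuousOn (fun v : ℝ => -B (p + 1) t (c * v)) (Icc a w) :=
    ((continuousOn_B_right (p + 1) ht hc).mono hIcc).neg
  have hderiv : ∀ x ∈ Ioo a w, HasDerivWithinAt (fun v : ℝ => -B (p + 1) t (c * v))
      (B p (t / x) c) (Ioi x) x := by
    intro x hx
    have hx0 : 0 < x := lt_trans ha hx.1
    rcases lt_or_ge (c * x) t with h | h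
    · have := ((hasDerivAt_B p hp ht hc hx0 h).neg)
      rw [neg_neg] at this
      exact this.hasDerivWithinAt
    · have hBx : B p (t / x) c = 0 :=
        B_of_le p (div_pos ht hx0) ((div_le_iff₀ hx0).2 (by linarith [mul_comm c x]))
      rw [hBx]
      apply (hasDerivWithinAt_const x (Ioi x) (0:ℝ)).congr
      · intro y hy
        have hy0 : x < y := hy
        have : t ≤ c * y := le_trans h (by nlinarith)
        rw [B_of_le (p + 1) ht this, neg_zero]
      · rw [B_of_le (p + 1) ht h, neg_zero]
  have hint : IntervalIntegrable (fun u : ℝ => B p (t / u) c) volume a w := by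
    apply ContinuousOn.intervalIntegrable
    apply (continuousOn_B_left p ht hc).mono
    rw [uIcc_of_le haw]
    exact hIcc
  have := intervalIntegral.integral_eq_sub_of_hasDeriv_right_of_le haw hcont hderiv hint
  rw [this]
  ring

/-- Ishihara's sum. -/
noncomputable def Phi (p : ℕ) (a w t : ℝ) : ℝ :=
  ∑ s ∈ Finset.range (p + 1), (p.choose s : ℝ) * (-1 : ℝ) ^ s * B p t (a ^ (p - s) * w ^ s)

lemma Phi_one (a w t : ℝ) : Phi 1 a w t = max (t - a) 0 - max (t - w) 0 := by
  have hB : ∀ c : ℝ, B 1 t c = max (t - c) 0 := by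
    intro c
    simp [B]
  rw [Phi, Finset.sum_range_succ, Finset.sum_range_succ, Finset.sum_range_zero]
  simp [hB]
  ring

lemma pascal_sum (p : ℕ) (E : ℕ → ℝ) :
    ∑ s ∈ Finset.range (p + 1), (p.choose s : ℝ) * (-1 : ℝ) ^ s * (E s - E (s + 1))
      = ∑ s ∈ Finset.range (p + 2), ((p + 1).choose s : ℝ) * (-1 : ℝ) ^ s * E s := by
  rw [Finset.sum_range_succ' _ (p + 1)]
  simp only [Nat.choose_succ_succ, Nat.cast_add, Nat.choose_zero_right, Nat.cast_one, pow_zero,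
    one_mul, mul_sub]
  rw [Finset.sum_sub_distrib]
  have h1 : ∑ s ∈ Finset.range (p + 1),
      ((p.choose s : ℝ) + (p.choose (s + 1) : ℝ)) * (-1 : ℝ) ^ (s + 1) * E (s + 1)
      = (∑ s ∈ Finset.range (p + 1), (p.choose (s + 1) : ℝ) * (-1 : ℝ) ^ (s + 1) * E (s + 1))
        - ∑ s ∈ Finset.range (p + 1), (p.choose s : ℝ) * (-1 : ℝ) ^ s * E (s + 1) := by
    rw [← Finset.sum_sub_distrib]
    apply Finset.sum_congr rfl
    intro s hs
    rw [pow_succ]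
    ring
  rw [h1]
  have h2 : ∑ s ∈ Finset.range (p + 1), (p.choose (s + 1) : ℝ) * (-1 : ℝ) ^ (s + 1) * E (s + 1)
      = ∑ s ∈ Finset.range p, (p.choose (s + 1) : ℝ) * (-1 : ℝ) ^ (s + 1) * E (s + 1) := by
    rw [Finset.sum_range_succ, Nat.choose_succ_self]
    simp
  have h3 : ∑ s ∈ Finset.range (p + 1), (p.choose s : ℝ) * (-1 : ℝ) ^ s * E s
      = (∑ s ∈ Finset.range p, (p.choose (s + 1) : ℝ) * (-1 : ℝ) ^ (s + 1) * E (s + 1))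
        + E 0 := by
    rw [Finset.sum_range_succ' _ p]
    simp
  rw [h2, h3]
  ring

lemma Phi_rec (p : ℕ) (hp : 1 ≤ p) {a w t : ℝ} (ha : 0 < a) (haw : a ≤ w) (ht : 0 < t) :
    ∫ u in a..w, Phi p a w (t / u) = Phi (p + 1) a w t := by
  have hc : ∀ s : ℕ, 0 < a ^ (p - s) * w ^ s := by
    intro s
    have hw : 0 < w := lt_of_lt_of_le ha haw
    positivity
  have hInt : ∀ s ∈ Finset.range (p + 1), IntervalIntegrable
      (fun u => (p.choose s : ℝ) * (-1 : ℝ) ^ s * B p (t / u) (a ^ (p - s) * w ^ s))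
      volume a w := by
    intro s _
    apply ContinuousOn.intervalIntegrable
    apply continuousOn_const.mul
    apply (continuousOn_B_left p ht (hc s)).mono
    rw [uIcc_of_le haw]
    exact fun x hx => lt_of_lt_of_le ha hx.1
  have step1 : ∫ u in a..w, Phi p a w (t / u)
      = ∑ s ∈ Finset.range (p + 1), ∫ u in a..w,
          (p.choose s : ℝ) * (-1 : ℝ) ^ s * B p (t / u) (a ^ (p - s) * w ^ s) := by
    rw [← intervalIntegral.integral_finset_sum hInt]
    rfl
  rw [step1]
  have step2 : ∀ s ∈ Finset.range (p + 1),
      (∫ u in a..w, (p.choose s : ℝ) * (-1 : ℝ) ^ s * B p (t / u) (a ^ (p - s) * w ^ s))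
      = (p.choose s : ℝ) * (-1 : ℝ) ^ s *
          (B (p + 1) t (a ^ (p + 1 - s) * w ^ s) - B (p + 1) t (a ^ (p - s) * w ^ (s + 1))) := by
    intro s hs
    rw [Finset.mem_range] at hs
    rw [intervalIntegral.integral_const_mul, integral_B p hp ht (hc s) ha haw]
    have e1 : a ^ (p - s) * w ^ s * a = a ^ (p + 1 - s) * w ^ s := by
      have : p + 1 - s = (p - s) + 1 := by omega
      rw [this, pow_succ]
      ring
    have e2 : a ^ (p - s) * w ^ s * w = a ^ (p - s) * w ^ (s + 1) := by
      rw [pow_succ]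
      ring
    rw [e1, e2]
  rw [Finset.sum_congr rfl step2]
  have := pascal_sum p (fun s => B (p + 1) t (a ^ (p + 1 - s) * w ^ s))
  have hrw : ∀ s ∈ Finset.range (p + 1),
      (p.choose s : ℝ) * (-1 : ℝ) ^ s *
        (B (p + 1) t (a ^ (p + 1 - s) * w ^ s) - B (p + 1) t (a ^ (p - s) * w ^ (s + 1)))
      = (p.choose s : ℝ) * (-1 : ℝ) ^ s *
        (B (p + 1) t (a ^ (p + 1 - s) * w ^ s) - B (p + 1) t (a ^ (p + 1 - (s + 1)) * w ^ (s + 1))) := by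
    intro s hs
    have h : p + 1 - (s + 1) = p - s := Nat.succ_sub_succ p s
    rw [h]
  rw [Finset.sum_congr rfl hrw, this]
  rfl




lemma vol_succ (a w t : ℝ) (p : ℕ) :
    (Measure.pi fun _ : Fin (p + 1) => volume.restrict (Ioo a w)) {x | ∏ i, x i ≤ t}
      = ∫⁻ u in Ioo a w,
          (Measure.pi fun _ : Fin p => volume.restrict (Ioo a w)) {x | u * ∏ i, x i ≤ t} := by
  set ν := volume.restrict (Ioo a w) with hν
  have hprodmeas : Measurable fun x : Fin p → ℝ => ∏ i, x i :=
    Finset.measurable_prod _ (fun i _ => measurable_pi_apply i)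
  have hT : MeasurableSet {q : ℝ × (Fin p → ℝ) | q.1 * ∏ i, q.2 i ≤ t} :=
    measurableSet_le (measurable_fst.mul (hprodmeas.comp measurable_snd)) measurable_const
  have hmp := measurePreserving_piFinSuccAbove (fun _ : Fin (p + 1) => ν) 0
  have hpre := hmp.measure_preimage hT.nullMeasurableSet
  have hset : (MeasurableEquiv.piFinSuccAbove (fun _ : Fin (p + 1) => ℝ) 0) ⁻¹'
      {q : ℝ × (Fin p → ℝ) | q.1 * ∏ i, q.2 i ≤ t} = {x : Fin (p + 1) → ℝ | ∏ i, x i ≤ t} := by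
    ext x
    simp [MeasurableEquiv.piFinSuccAbove, Fin.prod_univ_succ, Fin.succAbove_zero, Fin.tail]
  rw [hset] at hpre
  rw [hpre, Measure.prod_apply hT]
  rfl

lemma vol_one {a w : ℝ} (ha : 0 < a) (haw : a < w) (t : ℝ) :
    ((Measure.pi fun _ : Fin 1 => volume.restrict (Ioo a w)) {x | ∏ i, x i ≤ t}).toReal
      = Phi 1 a w t := by
  rw [vol_succ]
  have hinner : ∀ u : ℝ,
      (Measure.pi fun _ : Fin 0 => volume.restrict (Ioo a w)) {x : Fin 0 → ℝ | u * ∏ i, x i ≤ t}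
        = Set.indicator (Iic t) 1 u := by
    intro u
    rcases le_or_gt u t with h | h
    · have hseteq : {x : Fin 0 → ℝ | u * ∏ i, x i ≤ t} = Set.univ := by
        ext x
        simp [h]
      rw [hseteq, Set.indicator_of_mem (mem_Iic.2 h), Measure.pi_univ]
      simp
    · have hseteq : {x : Fin 0 → ℝ | u * ∏ i, x i ≤ t} = (∅ : Set (Fin 0 → ℝ)) := by
        ext x
        simp [not_le.2 h]
      rw [hseteq, Set.indicator_of_notMem (by simpa [mem_Iic] using not_le.2 h)]
      simp
  rw [lintegral_congr hinner, lintegral_indicator_one measurableSet_Iic,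
    Measure.restrict_apply measurableSet_Iic, Phi_one]
  rcases le_or_gt t a with h | h
  · have : Iic t ∩ Ioo a w = (∅ : Set ℝ) := by
      ext u
      simp only [mem_inter_iff, mem_Iic, mem_Ioo, mem_empty_iff_false, iff_false, not_and]
      intro h1 h2
      linarith
    rw [this]
    simp
    rw [max_eq_right (by linarith), max_eq_right (by linarith)]
    ring
  · rcases lt_or_ge t w with h2 | h2
    · have : Iic t ∩ Ioo a w = Ioc a t := by
        ext u
        simp only [mem_inter_iff, mem_Iic, mem_Ioo, mem_Ioc]
        constructor
        · rintro ⟨h1, h3, h4⟩; exact ⟨h3, h1⟩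
        · rintro ⟨h1, h3⟩; exact ⟨h3, h1, by linarith⟩
      rw [this, Real.volume_Ioc, ENNReal.toReal_ofReal (by linarith)]
      rw [max_eq_left (by linarith), max_eq_right (by linarith)]
      ring
    · have : Iic t ∩ Ioo a w = Ioo a w := by
        ext u
        simp only [mem_inter_iff, mem_Iic, mem_Ioo]
        constructor
        · rintro ⟨h1, h3, h4⟩; exact ⟨h3, h4⟩
        · rintro ⟨h1, h3⟩; exact ⟨by linarith, h1, h3⟩
      rw [this, Real.volume_Ioo, ENNReal.toReal_ofReal (by linarith)]
      rw [max_eq_left (by linarith), max_eq_left (by linarith)]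
      ring

lemma vol_eq_phi {a w : ℝ} (ha : 0 < a) (haw : a < w) (p : ℕ) (hp : 1 ≤ p) :
    ∀ t : ℝ, 0 < t →
      ((Measure.pi fun _ : Fin p => volume.restrict (Ioo a w)) {x | ∏ i, x i ≤ t}).toReal
        = Phi p a w t := by
  induction p with
  | zero => omega
  | succ n ih =>
    rcases Nat.eq_zero_or_pos n with rfl | hn
    · exact fun t ht => vol_one ha haw t
    intro t ht
    have IH := ih hn
    set νp := Measure.pi fun _ : Fin n => volume.restrict (Ioo a w) with hνp
    have hprodmeas : Measurable fun x : Fin n → ℝ => ∏ i, x i :=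
      Finset.measurable_prod _ (fun i _ => measurable_pi_apply i)
    have hfin : νp Set.univ < ⊤ := by
      rw [hνp, Measure.pi_univ]
      simp only [Measure.restrict_apply_univ, Real.volume_Ioo, Finset.prod_const,
        Finset.card_univ, Fintype.card_fin]
      exact ENNReal.pow_lt_top ENNReal.ofReal_lt_top
    rw [vol_succ]
    have hcong : ∫⁻ u in Ioo a w, νp {x | u * ∏ i, x i ≤ t}
        = ∫⁻ u in Ioo a w, νp {x | ∏ i, x i ≤ t / u} := by
      apply setLIntegral_congr_fun measurableSet_Ioo
      intro u hu
      dsimp only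
      congr 1
      ext x
      have hu0 : 0 < u := ha.trans hu.1
      simp only [Set.mem_setOf_eq]
      rw [← le_div_iff₀' hu0]
    rw [hcong]
    have hmeasint : Measurable fun u : ℝ => νp {x | ∏ i, x i ≤ t / u} := by
      have hT' : MeasurableSet {q : ℝ × (Fin n → ℝ) | ∏ i, q.2 i ≤ t / q.1} :=
        measurableSet_le (hprodmeas.comp measurable_snd) (measurable_const.div measurable_fst)
      exact measurable_measure_prodMk_left (ν := νp) hT'
    have htoReal := integral_toReal (μ := volume.restrict (Ioo a w))
      hmeasint.aemeasurable
      (Filter.Eventually.of_forall fun u => lt_of_le_of_lt (measure_mono (Set.subset_univ _)) hfin)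
    rw [← htoReal]
    have hstep : ∫ u in Ioo a w, (νp {x | ∏ i, x i ≤ t / u}).toReal
        = ∫ u in Ioo a w, Phi n a w (t / u) := by
      apply setIntegral_congr_fun measurableSet_Ioo
      intro u hu
      exact IH (t / u) (div_pos ht (ha.trans hu.1))
    rw [hstep, ← integral_Ioc_eq_integral_Ioo, ← intervalIntegral.integral_of_le haw.le]
    exact Phi_rec n hn ha haw.le ht

end Ishihara

open Ishihara in
/-- Ishihara's formula for the distribution function of a product of i.i.d.
uniform random variables on an interval `(a, w)`. -/
theorem prod_uniform_interval_cdf {Ω : Type*} [MeasureSpace Ω]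
    [IsProbabilityMeasure (ℙ : Measure Ω)] (p : ℕ) (hp : 1 ≤ p)
    (a w : ℝ) (haw : 0 < a) (haw' : a < w)
    (U : Fin p → Ω → ℝ) (hmeas : ∀ i, Measurable (U i))
    (hindep : iIndepFun U ℙ)
    (hunif : ∀ i, Measure.map (U i) ℙ
      = (ENNReal.ofReal (w - a))⁻¹ • volume.restrict (Set.Ioo a w))
    (t : ℝ) (ht : 0 < t) :
    (w - a) ^ p * (ℙ {ω | (∏ i, U i ω) ≤ t}).toReal =
      ∑ s ∈ Finset.range (p + 1), (p.choose s : ℝ) * (-1) ^ s *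
        (t * ∑ j ∈ Finset.Icc 1 (p - 1),
            ((-1 : ℝ) ^ (j + 1) / (Nat.factorial (p - j))) *
              (max (Real.log (t / (a ^ (p - s) * w ^ s))) 0) ^ (p - j)
          + (-1 : ℝ) ^ (p - 1) * max (t - a ^ (p - s) * w ^ s) 0) := by
  classical
  have hwa : 0 < w - a := by linarith
  haveI hprob : ∀ i, IsProbabilityMeasure (Measure.map (U i) ℙ) :=
    fun i => Measure.isProbabilityMeasure_map (hmeas i).aemeasurable
  haveI hσ : ∀ i : Fin p, SigmaFinite (Measure.map (U i) ℙ) := fun i => by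
    haveI := hprob i; infer_instance
  have hprodmeas : Measurable fun x : Fin p → ℝ => ∏ i, x i :=
    Finset.measurable_prod _ (fun i _ => measurable_pi_apply i)
  have hS : MeasurableSet {x : Fin p → ℝ | ∏ i, x i ≤ t} :=
    measurableSet_le hprodmeas measurable_const
  have hjointmeas : Measurable fun ω (i : Fin p) => U i ω :=
    measurable_pi_lambda _ fun i => hmeas i
  have hjoint : Measure.pi (fun i : Fin p => Measure.map (U i) ℙ)
      = Measure.map (fun ω (i : Fin p) => U i ω) ℙ := by
    refine Measure.pi_eq fun s hs => ?_
    rw [Measure.map_apply hjointmeas (MeasurableSet.univ_pi hs)]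
    have hpre : (fun ω (i : Fin p) => U i ω) ⁻¹' (Set.univ.pi s) = ⋂ i, U i ⁻¹' s i := by
      ext ω
      simp [Set.mem_univ_pi]
    rw [hpre, hindep.meas_iInter (fun i => ⟨s i, hs i, rfl⟩)]
    exact Finset.prod_congr rfl fun i _ => (Measure.map_apply (hmeas i) (hs i)).symm
  have hpi2 : Measure.pi (fun i : Fin p => Measure.map (U i) ℙ)
      = ((ENNReal.ofReal (w - a))⁻¹) ^ p •
          Measure.pi (fun _ : Fin p => volume.restrict (Set.Ioo a w)) := by
    refine Measure.pi_eq fun s hs => ?_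
    rw [Measure.smul_apply, Measure.pi_pi, smul_eq_mul]
    have hc : ((ENNReal.ofReal (w - a))⁻¹) ^ p = ∏ _i : Fin p, (ENNReal.ofReal (w - a))⁻¹ := by
      simp
    rw [hc, ← Finset.prod_mul_distrib]
    exact Finset.prod_congr rfl fun i _ => by rw [hunif i]; rfl
  have hP : ℙ {ω | (∏ i, U i ω) ≤ t}
      = Measure.map (fun ω (i : Fin p) => U i ω) ℙ {x | ∏ i, x i ≤ t} := by
    rw [Measure.map_apply hjointmeas hS]
    rfl
  rw [hP, ← hjoint, hpi2, Measure.smul_apply, smul_eq_mul, ENNReal.toReal_mul,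
    ENNReal.toReal_pow, ENNReal.toReal_inv, ENNReal.toReal_ofReal hwa.le,
    vol_eq_phi haw haw' p hp t ht]
  have hfin : (w - a) ^ p * (((w - a)⁻¹) ^ p * Phi p a w t) = Phi p a w t := by
    rw [← mul_assoc, ← mul_pow, mul_inv_cancel₀ hwa.ne', one_pow, one_mul]
  rw [hfin]
  rfl
end

section
/- Let $\beta \in (0,1)$ and let $u : \mathbb{N} \to [0,1]$ satisfy $u(n) \le C_0 n^{\beta-1}$ for all $n \ge 1$. Fix $p \ge 2$ with $\beta_p := p\beta - p + 1 = 0$ and fix $1 \le r \le p-1$ (so $\beta_r = r\beta - r + 1 > 0$). Then there is a constant $C$ such that for all integers $d \ge 2$: $\sum_{k=1}^{d}(d-k)\,k^{\beta_r - 1}\, \bar F_p(d-k) \le C\, \frac{d^{\beta_r + 1}}{\log d}$, whenever $\bar F_p : \mathbb{N}_0 \to [0,1]$ is non-increasing with $\bar F_p(n) \le C_1 / \log(n+2)$ for all $n$. -/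
open Real Finset

/-- Key telescoping step: `a * x^(a-1) ≤ x^a - (x-1)^a` for `x ≥ 1`, `0 < a ≤ 1`. -/
lemma aux_rpow_step {a x : ℝ} (ha : 0 < a) (ha1 : a ≤ 1) (hx : 1 ≤ x) :
    a * x ^ (a - 1) ≤ x ^ a - (x - 1) ^ a := by
  have hx0 : 0 < x := lt_of_lt_of_le one_pos hx
  have h1 : x - 1 = x * (1 + (-1 / x)) := by field_simp; ring
  have hber : (1 + (-1 / x)) ^ a ≤ 1 + a * (-1 / x) := by
    apply rpow_one_add_le_one_add_mul_self _ ha.le ha1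
    rw [neg_div, neg_le_neg_iff, div_le_one hx0]
    exact hx
  have hnn : 0 ≤ 1 + (-1 / x) := by
    rw [neg_div, ← sub_eq_add_neg, sub_nonneg, div_le_one hx0]; exact hx
  have h2 : (x - 1) ^ a = x ^ a * (1 + (-1 / x)) ^ a := by
    rw [h1, Real.mul_rpow hx0.le hnn]
  have h3 : x ^ a * (1 + (-1 / x)) ^ a ≤ x ^ a * (1 + a * (-1 / x)) := by
    apply mul_le_mul_of_nonneg_left hber (rpow_nonneg hx0.le a)
  have h4 : x ^ a * (1 + a * (-1 / x)) = x ^ a - a * x ^ (a - 1) := by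
    have : x ^ (a - 1) = x ^ a / x := by
      rw [rpow_sub hx0, rpow_one]
    rw [this]; field_simp; ring
  nlinarith [h2, h3, h4]

/-- Sum bound: `∑_{k=1}^d k^(a-1) ≤ d^a / a` for `0 < a ≤ 1`. -/
lemma aux_sum_rpow {a : ℝ} (ha : 0 < a) (ha1 : a ≤ 1) (d : ℕ) :
    ∑ k ∈ Finset.Icc 1 d, (k : ℝ) ^ (a - 1) ≤ (d : ℝ) ^ a / a := by
  have key : ∀ k ∈ Finset.Icc 1 d, (k : ℝ) ^ (a - 1) ≤
      ((k : ℝ) ^ a - ((k : ℝ) - 1) ^ a) / a := by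
    intro k hk
    have hk1 : (1 : ℝ) ≤ k := by
      exact_mod_cast (Finset.mem_Icc.mp hk).1
    rw [le_div_iff₀ ha]
    have := aux_rpow_step ha ha1 hk1
    linarith
  calc ∑ k ∈ Finset.Icc 1 d, (k : ℝ) ^ (a - 1)
      ≤ ∑ k ∈ Finset.Icc 1 d, ((k : ℝ) ^ a - ((k : ℝ) - 1) ^ a) / a :=
        Finset.sum_le_sum key
    _ = (∑ k ∈ Finset.Icc 1 d, ((k : ℝ) ^ a - ((k : ℝ) - 1) ^ a)) / a :=
        (Finset.sum_div _ _ _).symm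
    _ ≤ (d : ℝ) ^ a / a := by
        gcongr
        have : ∑ k ∈ Finset.Icc 1 d, ((k : ℝ) ^ a - ((k : ℝ) - 1) ^ a)
            = ∑ i ∈ Finset.range d, (((i + 1 : ℕ) : ℝ) ^ a - ((i : ℕ) : ℝ) ^ a) := by
          rw [← Finset.Ico_add_one_right_eq_Icc, Finset.sum_Ico_eq_sum_range]
          apply Finset.sum_congr (by simp)
          intro i _
          push_cast; ring_nf
        rw [this, Finset.sum_range_sub (fun n => ((n : ℕ) : ℝ) ^ a)]
        simp [Real.zero_rpow ha.ne']

/-- Critical-regime convolution bound: with `β_p = 0`, `1 ≤ r ≤ p-1` (so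
`β_r > 0`), and a non-increasing tail `F̄_p(n) ≤ C₁/log(n+2)`, one has
`∑_{k=1}^d (d-k) k^{β_r-1} F̄_p(d-k) ≤ C d^{β_r+1}/log d` for all `d ≥ 2`. -/
theorem critical_convolution_bound (β : ℝ) (hβ : β ∈ Set.Ioo (0 : ℝ) 1)
    (u : ℕ → ℝ) (hu0 : ∀ n, u n ∈ Set.Icc (0 : ℝ) 1)
    (C0 : ℝ) (hC0 : 0 < C0)
    (hu : ∀ n : ℕ, 1 ≤ n → u n ≤ C0 * (n : ℝ) ^ (β - 1))
    (p : ℕ) (hp : 2 ≤ p) (hβp : (p : ℝ) * β - p + 1 = 0)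
    (r : ℕ) (hr1 : 1 ≤ r) (hr2 : r ≤ p - 1)
    (C1 : ℝ) (hC1 : 0 < C1)
    (Fp : ℕ → ℝ) (hFp0 : ∀ n, Fp n ∈ Set.Icc (0 : ℝ) 1)
    (hFpmono : ∀ m n : ℕ, m ≤ n → Fp n ≤ Fp m)
    (hFpbd : ∀ n : ℕ, Fp n ≤ C1 / Real.log (n + 2)) :
    ∃ C : ℝ, 0 < C ∧ ∀ d : ℕ, 2 ≤ d →
      (∑ k ∈ Finset.Icc 1 d,
          ((d : ℝ) - k) * (k : ℝ) ^ ((r : ℝ) * β - r + 1 - 1) * Fp (d - k))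
        ≤ C * (d : ℝ) ^ ((r : ℝ) * β - r + 1 + 1) / Real.log d := by
  set a : ℝ := (r : ℝ) * β - r + 1 with ha_def
  have hp0 : (0 : ℝ) < p := by positivity
  have hβval : β = ((p : ℝ) - 1) / p := by rw [eq_div_iff hp0.ne']; linear_combination hβp
  have hrp : (r : ℝ) ≤ (p : ℝ) - 1 := by
    have : (r : ℝ) ≤ ((p - 1 : ℕ) : ℝ) := by exact_mod_cast hr2
    rwa [Nat.cast_sub (by omega), Nat.cast_one] at this
  have hr1' : (1 : ℝ) ≤ r := by exact_mod_cast hr1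
  have ha : 0 < a := by
    have : a = 1 - (r : ℝ) / p := by
      rw [ha_def, hβval]; field_simp; ring
    rw [this]
    have : (r : ℝ) / p < 1 := by
      rw [div_lt_one hp0]; linarith
    linarith
  have ha1 : a ≤ 1 := by
    have : 0 < (r : ℝ) / p := by positivity
    have h : a = 1 - (r : ℝ) / p := by
      rw [ha_def, hβval]; field_simp; ring
    rw [h]; linarith
  clear_value a
  refine ⟨(2 + 2 * C1) / a, by positivity, ?_⟩
  intro d hd
  have hd1 : (1 : ℝ) < d := by exact_mod_cast lt_of_lt_of_le one_lt_two hd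
  have hd0 : (0 : ℝ) < d := lt_trans one_pos hd1
  have hlogd : 0 < Real.log d := Real.log_pos hd1
  have hsqrt : 0 < Real.sqrt d := Real.sqrt_pos.mpr hd0
  have hlog_sqrt : Real.log d ≤ 2 * Real.sqrt d := by
    have h1 : Real.log d = 2 * Real.log (Real.sqrt d) := by
      rw [Real.log_sqrt hd0.le]; ring
    have h2 : Real.log (Real.sqrt d) ≤ Real.sqrt d - 1 :=
      Real.log_le_sub_one_of_pos hsqrt
    linarith
  -- Per-term bound: for j ≤ d, j * Fp j ≤ (2 + 2*C1) * d / log d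
  have hterm : ∀ j : ℕ, j ≤ d → (j : ℝ) * Fp j ≤ (2 + 2 * C1) * d / Real.log d := by
    intro j hj
    have hFj := hFp0 j
    rw [Set.mem_Icc] at hFj
    have hjd : (j : ℝ) ≤ d := by exact_mod_cast hj
    rw [le_div_iff₀ hlogd]
    by_cases hcase : (j : ℝ) ≤ Real.sqrt d
    · -- small j : use Fp ≤ 1 and sqrt d * log d ≤ 2 d
      have h1 : (j : ℝ) * Fp j ≤ Real.sqrt d := by
        calc (j : ℝ) * Fp j ≤ (j : ℝ) * 1 :=
              mul_le_mul_of_nonneg_left hFj.2 (by positivity)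
          _ = (j : ℝ) := mul_one _
          _ ≤ Real.sqrt d := hcase
      calc (j : ℝ) * Fp j * Real.log d ≤ Real.sqrt d * Real.log d := by
            apply mul_le_mul_of_nonneg_right h1 hlogd.le
        _ ≤ Real.sqrt d * (2 * Real.sqrt d) :=
            mul_le_mul_of_nonneg_left hlog_sqrt hsqrt.le
        _ = 2 * ((Real.sqrt d) * (Real.sqrt d)) := by ring
        _ = 2 * d := by rw [Real.mul_self_sqrt hd0.le]
        _ ≤ (2 + 2 * C1) * d := by nlinarith
    · -- large j : log (j+2) ≥ (1/2) log d
      push_neg at hcase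
      have hj2 : Real.sqrt d ≤ (j : ℝ) + 2 := by linarith
      have hlogj : Real.log d / 2 ≤ Real.log ((j : ℝ) + 2) := by
        have := Real.log_le_log hsqrt hj2
        rwa [Real.log_sqrt hd0.le] at this
      have hlogj0 : 0 < Real.log ((j : ℝ) + 2) := lt_of_lt_of_le (by linarith) hlogj
      have hFpb : Fp j ≤ C1 / Real.log ((j : ℝ) + 2) := by
        have := hFpbd j
        exact_mod_cast this
      have h2 : Fp j * Real.log d ≤ 2 * C1 := by
        have h3 : Fp j * Real.log ((j : ℝ) + 2) ≤ C1 := by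
          rw [← le_div_iff₀ hlogj0]; exact hFpb
        nlinarith
      calc (j : ℝ) * Fp j * Real.log d = (j : ℝ) * (Fp j * Real.log d) := by ring
        _ ≤ (d : ℝ) * (2 * C1) := by
            exact mul_le_mul hjd h2 (mul_nonneg hFj.1 hlogd.le) hd0.le
        _ ≤ (2 + 2 * C1) * d := by nlinarith
  -- Combine
  have hstep : (∑ k ∈ Finset.Icc 1 d, ((d : ℝ) - k) * (k : ℝ) ^ (a - 1) * Fp (d - k))
      ≤ ((2 + 2 * C1) * d / Real.log d) * ∑ k ∈ Finset.Icc 1 d, (k : ℝ) ^ (a - 1) := by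
    rw [Finset.mul_sum]
    apply Finset.sum_le_sum
    intro k hk
    obtain ⟨hk1, hkd⟩ := Finset.mem_Icc.mp hk
    have hcast : (d : ℝ) - k = ((d - k : ℕ) : ℝ) := by
      rw [Nat.cast_sub hkd]
    have hpow : (0 : ℝ) ≤ (k : ℝ) ^ (a - 1) := rpow_nonneg (by positivity) _
    calc ((d : ℝ) - k) * (k : ℝ) ^ (a - 1) * Fp (d - k)
        = (((d - k : ℕ) : ℝ) * Fp (d - k)) * (k : ℝ) ^ (a - 1) := by
          rw [hcast]; ring
      _ ≤ ((2 + 2 * C1) * d / Real.log d) * (k : ℝ) ^ (a - 1) := by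
          apply mul_le_mul_of_nonneg_right (hterm (d - k) (Nat.sub_le d k)) hpow
  have hsum := aux_sum_rpow ha ha1 d
  have hfinal : ((2 + 2 * C1) * d / Real.log d) * ∑ k ∈ Finset.Icc 1 d, (k : ℝ) ^ (a - 1)
      ≤ (2 + 2 * C1) / a * (d : ℝ) ^ (a + 1) / Real.log d := by
    have hC2 : 0 ≤ (2 + 2 * C1) * d / Real.log d := by positivity
    calc ((2 + 2 * C1) * d / Real.log d) * ∑ k ∈ Finset.Icc 1 d, (k : ℝ) ^ (a - 1)
        ≤ ((2 + 2 * C1) * d / Real.log d) * ((d : ℝ) ^ a / a) :=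
          mul_le_mul_of_nonneg_left hsum hC2
      _ = (2 + 2 * C1) / a * ((d : ℝ) ^ a * (d : ℝ)) / Real.log d := by ring
      _ = (2 + 2 * C1) / a * (d : ℝ) ^ (a + 1) / Real.log d := by
          rw [Real.rpow_add hd0, Real.rpow_one]
  exact le_trans hstep hfinal
end

section
/- Fix $p \ge 1$, $q \in \{0,\dots,p-1\}$, $m \ge 1$, and real $\alpha \in (0,2)$. There is a constant $C$ such that for all $K \ge 1$ and $R \ge 2$ with $KR \ge (m+1)^p$: $\sum_{\substack{m < i_{q+1} < \cdots < i_p \\ i_{q+1}\cdots i_p > KR}} (i_{q+1} \cdots i_p)^{-2/\alpha} \le C\, (KR)^{1 - 2/\alpha}\, \big(\log (KR)\big)^{p-q-1}$. -/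
/-!
Forgetting the ordering of the indices and the bound `m`, it suffices to bound the sum `S_k(T)`
of `(i_1 ⋯ i_k)^(-s)`, `s = 2/α > 1`, over all `k`-tuples of integers `≥ 2` with product `> T`.
Splitting off the first index `a` gives `S_{k+1}(T) = ∑_a a^(-s) S_k(T/a)`. For `a ≤ T`,
induction bounds the term by `a^(-s) (T/a)^(1-s) (1 + log T)^(k-1) = T^(1-s) (1 + log T)^(k-1) / a`,
and `∑_{2 ≤ a ≤ T} 1/a ≤ log T` produces one more logarithm. For `a > T` we only use
`S_k ≤ (∑_{a ≥ 2} a^(-s))^k`, together with the integral-test bound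
`∑_{a > T} a^(-s) = O(T^(1-s))`.
All sums live in `ℝ≥0∞`, so summability is only needed at the very end.
-/

open Real Finset
open scoped ENNReal

lemma tsum_nat_add_rpow_neg_le {s : ℝ} (hs : 1 < s) {N : ℕ} (hN : 1 ≤ N) :
    ∑' n : ℕ, ((n + N + 1 : ℕ) : ℝ) ^ (-s) ≤ (N : ℝ) ^ (1 - s) / (s - 1) := by
  have hN₀ : (0 : ℝ) < N := by exact_mod_cast hN
  have anti : AntitoneOn (fun t : ℝ => t ^ (-s)) (Set.Ici (N : ℝ)) := fun x hx y _ hxy =>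
    rpow_le_rpow_of_nonpos (hN₀.trans_le hx) hxy (by linarith)
  calc ∑' n : ℕ, ((n + N + 1 : ℕ) : ℝ) ^ (-s)
      ≤ ∫ t in Set.Ioi (N : ℝ), t ^ (-s) :=
        anti.tsum_comp_add_le_integral N (integrableOn_Ioi_rpow_of_lt (by linarith) hN₀)
          fun t ht => rpow_nonneg (hN₀.trans ht).le _
    _ = (N : ℝ) ^ (1 - s) / (s - 1) := by
        rw [integral_Ioi_rpow_of_lt (by linarith) hN₀, neg_add_eq_sub, ← neg_sub s 1, div_neg,
          neg_div, neg_neg]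

lemma natFloor_rpow_le {T : ℝ} (hT : 1 ≤ T) {r : ℝ} (hr : r ≤ 0) :
    (⌊T⌋₊ : ℝ) ^ r ≤ 2 ^ (-r) * T ^ r := by
  have hfloor : T / 2 ≤ ⌊T⌋₊ := by
    have h1 : (1 : ℝ) ≤ ⌊T⌋₊ := by exact_mod_cast (Nat.one_le_floor_iff T).mpr hT
    linarith [Nat.lt_floor_add_one T]
  calc (⌊T⌋₊ : ℝ) ^ r ≤ (T / 2) ^ r := rpow_le_rpow_of_nonpos (by positivity) hfloor hr
    _ = 2 ^ (-r) * T ^ r := by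
        rw [div_rpow (by positivity) (by positivity), rpow_neg (by positivity), div_eq_inv_mul]

lemma rpow_neg_mul_div_rpow {a T : ℝ} (ha : 0 < a) (hT : 0 ≤ T) (s : ℝ) :
    a ^ (-s) * (T / a) ^ (1 - s) = a ^ (-1 : ℝ) * T ^ (1 - s) := by
  rw [div_rpow hT ha.le, ← mul_div_assoc, mul_div_right_comm, ← rpow_sub ha]
  ring_nf

lemma one_add_log_le_three_mul_log {T : ℝ} (hT : 2 ≤ T) : 1 + log T ≤ 3 * log T := by
  linarith [log_le_log two_pos hT, log_two_gt_d9]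

lemma summable_and_tsum_le_of_tsum_ofReal_le {ι : Type*} {f : ι → ℝ} {c : ℝ}
    (hf : ∀ i, 0 ≤ f i) (hc : 0 ≤ c) (h : ∑' i, ENNReal.ofReal (f i) ≤ ENNReal.ofReal c) :
    Summable f ∧ ∑' i, f i ≤ c := by
  have hsum : Summable f := by
    simpa [ENNReal.toReal_ofReal (hf _)] using
      ENNReal.summable_toReal (ne_top_of_le_ne_top ENNReal.ofReal_ne_top h)
  refine ⟨hsum, ?_⟩
  rwa [← ENNReal.ofReal_tsum_of_nonneg hf hsum, ENNReal.ofReal_le_ofReal_iff hc] at h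

namespace TailSum

noncomputable def weight (s : ℝ) (a : ℕ) : ℝ≥0∞ :=
  if 2 ≤ a then ENNReal.ofReal ((a : ℝ) ^ (-s)) else 0

noncomputable def tailSum (s : ℝ) (k : ℕ) (T : ℝ) : ℝ≥0∞ :=
  ∑' i : Fin k → ℕ, if T < ∏ j, (i j : ℝ) then ∏ j, weight s (i j) else 0

variable {s : ℝ}

lemma weight_le_ofReal (s : ℝ) (a : ℕ) : weight s a ≤ ENNReal.ofReal ((a : ℝ) ^ (-s)) := by
  unfold weight
  split_ifs <;> simp

lemma tsum_weight_ne_top (hs : 1 < s) : ∑' a, weight s a ≠ ∞ :=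
  ne_top_of_le_ne_top (Real.summable_nat_rpow.mpr (by linarith)).tsum_ofReal_ne_top
    (ENNReal.tsum_le_tsum (weight_le_ofReal s))

lemma prod_weight_eq {k : ℕ} {i : Fin k → ℕ} (hi : ∀ j, 2 ≤ i j) :
    ∏ j, weight s (i j) = ENNReal.ofReal ((∏ j, (i j : ℝ)) ^ (-s)) := by
  rw [← finsetProd_rpow _ _ (fun j _ => by positivity),
    ENNReal.ofReal_prod_of_nonneg (fun j _ => by positivity)]
  simp [weight, hi]

lemma tsum_weight_gt_le (hs : 1 < s) {T : ℝ} (hT : 1 ≤ T) :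
    ∑' a : ℕ, (if T < a then weight s a else 0) ≤
      ENNReal.ofReal (2 ^ (s - 1) / (s - 1)) * ENNReal.ofReal (T ^ (1 - s)) := by
  set N := ⌊T⌋₊
  have hN : 1 ≤ N := (Nat.one_le_floor_iff T).mpr hT
  have hshift : ∑' n : ℕ, (if T < (n + N + 1 : ℕ) then weight s (n + N + 1) else 0) =
      ∑' a : ℕ, (if T < a then weight s a else 0) := by
    refine Function.Injective.tsum_eq (g := fun n => n + N + 1)
      (f := fun a : ℕ => if T < a then weight s a else 0) (fun a b h => by simpa using h)
      fun a ha => ?_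
    have : N < a := (Nat.floor_lt (by linarith)).mpr (by by_contra h; simp_all)
    exact ⟨a - N - 1, by simp only; omega⟩
  have hsum : Summable fun n : ℕ => ((n + N + 1 : ℕ) : ℝ) ^ (-s) :=
    (summable_nat_add_iff (N + 1)).mpr (Real.summable_nat_rpow.mpr (by linarith))
  calc ∑' a : ℕ, (if T < a then weight s a else 0)
      ≤ ∑' n : ℕ, ENNReal.ofReal (((n + N + 1 : ℕ) : ℝ) ^ (-s)) := by
        rw [← hshift]
        refine ENNReal.tsum_le_tsum fun n => ?_
        split_ifs
        exacts [weight_le_ofReal s _, zero_le]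
    _ = ENNReal.ofReal (∑' n : ℕ, ((n + N + 1 : ℕ) : ℝ) ^ (-s)) :=
        (ENNReal.ofReal_tsum_of_nonneg (fun n => by positivity) hsum).symm
    _ ≤ ENNReal.ofReal (2 ^ (s - 1) / (s - 1)) * ENNReal.ofReal (T ^ (1 - s)) := by
        rw [← ENNReal.ofReal_mul (div_nonneg (by positivity) (by linarith))]
        refine ENNReal.ofReal_le_ofReal ((tsum_nat_add_rpow_neg_le hs hN).trans ?_)
        have := natFloor_rpow_le hT (r := 1 - s) (by linarith)
        rw [neg_sub] at this
        rw [div_mul_eq_mul_div]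
        gcongr

lemma tsum_weight_one_le_log {T : ℝ} (hT : 1 ≤ T) :
    ∑' a : ℕ, (if (a : ℝ) ≤ T then weight 1 a else 0) ≤ ENNReal.ofReal (log T) := by
  set N := ⌊T⌋₊
  have hN : 1 ≤ N := (Nat.one_le_floor_iff T).mpr hT
  have hsupp : ∀ a ∉ Icc 2 N, (if (a : ℝ) ≤ T then weight 1 a else 0) = 0 := by
    intro a ha
    rw [mem_Icc, not_and_or, not_le, not_le] at ha
    rcases ha with ha | ha
    · simp [weight, show ¬ 2 ≤ a by omega]
    · rw [if_neg (not_le.mpr ((Nat.floor_lt (by linarith)).mp ha))]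
  have hharmonic : ∑ a ∈ Icc 2 N, (a : ℝ)⁻¹ ≤ log N := by
    have := harmonic_le_one_add_log N
    rw [harmonic_eq_sum_Icc, ← insert_Icc_add_one_left_eq_Icc hN, sum_insert (by simp)] at this
    push_cast at this
    linarith
  rw [tsum_eq_sum hsupp]
  calc ∑ a ∈ Icc 2 N, (if (a : ℝ) ≤ T then weight 1 a else 0)
      = ∑ a ∈ Icc 2 N, ENNReal.ofReal (a : ℝ)⁻¹ := by
        refine sum_congr rfl fun a ha => ?_
        rw [mem_Icc] at ha
        rw [if_pos (Nat.floor_le (by linarith) |>.trans' (by exact_mod_cast ha.2)), weight,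
          if_pos ha.1, rpow_neg_one]
    _ = ENNReal.ofReal (∑ a ∈ Icc 2 N, (a : ℝ)⁻¹) :=
        (ENNReal.ofReal_sum_of_nonneg fun a _ => by positivity).symm
    _ ≤ ENNReal.ofReal (log T) :=
        ENNReal.ofReal_le_ofReal (hharmonic.trans (log_le_log (by positivity) (Nat.floor_le
          (by linarith))))

lemma tailSum_zero (s T : ℝ) : tailSum s 0 T = if T < 1 then 1 else 0 := by
  simp [tailSum]

lemma tailSum_succ (s : ℝ) (k : ℕ) (T : ℝ) :
    tailSum s (k + 1) T = ∑' a : ℕ, weight s a * tailSum s k (T / a) := by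
  rw [tailSum, ← (Fin.consEquiv fun _ => ℕ).tsum_eq, ENNReal.tsum_prod']
  refine tsum_congr fun a => ?_
  rw [tailSum, ← ENNReal.tsum_mul_left]
  refine tsum_congr fun i => ?_
  simp only [Fin.consEquiv_apply, Fin.prod_univ_succ, Fin.cons_zero, Fin.cons_succ]
  by_cases ha : 2 ≤ a
  · have ha₀ : (0 : ℝ) < a := by positivity
    simp only [div_lt_iff₀' ha₀, mul_ite, mul_zero]
  · simp [weight, ha]

lemma tailSum_le_pow (s : ℝ) (k : ℕ) (T : ℝ) :
    tailSum s k T ≤ (∑' a, weight s a) ^ k := by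
  induction k generalizing T with
  | zero =>
    rw [tailSum_zero, pow_zero]
    split_ifs <;> simp
  | succ k ih =>
    calc tailSum s (k + 1) T
        ≤ ∑' a : ℕ, weight s a * (∑' a, weight s a) ^ k := by
          rw [tailSum_succ]
          exact ENNReal.tsum_le_tsum fun a => by gcongr; exact ih _
      _ = (∑' a, weight s a) ^ (k + 1) := by rw [ENNReal.tsum_mul_right, pow_succ']

lemma tailSum_succ_le {k : ℕ} {B : ℝ → ℝ≥0∞}
    (hB : ∀ x, 1 ≤ x → tailSum s k x ≤ B x) (T : ℝ) :
    tailSum s (k + 1) T ≤ ∑' a : ℕ, (if (a : ℝ) ≤ T then weight s a * B (T / a) else 0) +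
      (∑' a : ℕ, if T < a then weight s a else 0) * (∑' a, weight s a) ^ k := by
  rw [tailSum_succ, ← ENNReal.tsum_mul_right, ← ENNReal.tsum_add]
  refine ENNReal.tsum_le_tsum fun a => ?_
  rcases le_or_gt (a : ℝ) T with haT | haT
  · rw [if_pos haT, if_neg haT.not_gt, zero_mul, add_zero]
    by_cases ha : 2 ≤ a
    · gcongr
      exact hB _ ((one_le_div (by positivity)).mpr haT)
    · simp [weight, ha]
  · rw [if_neg haT.not_ge, if_pos haT, zero_add]
    gcongr
    exact tailSum_le_pow s k _

lemma weight_mul_ofReal_le {a : ℕ} {T : ℝ} (haT : (a : ℝ) ≤ T) (k : ℕ) :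
    weight s a * ENNReal.ofReal ((T / a) ^ (1 - s) * (1 + log (T / a)) ^ k) ≤
      weight 1 a * ENNReal.ofReal (T ^ (1 - s) * (1 + log T) ^ k) := by
  by_cases ha : 2 ≤ a
  swap
  · simp [weight, ha]
  have ha₀ : (0 : ℝ) < a := by positivity
  have hTa : 1 ≤ T / a := (one_le_div ha₀).mpr haT
  simp only [weight, if_pos ha, ← ENNReal.ofReal_mul (rpow_nonneg ha₀.le _)]
  refine ENNReal.ofReal_le_ofReal ?_
  calc (a : ℝ) ^ (-s) * ((T / a) ^ (1 - s) * (1 + log (T / a)) ^ k)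
      = (a : ℝ) ^ (-1 : ℝ) * T ^ (1 - s) * (1 + log (T / a)) ^ k := by
        rw [← mul_assoc, rpow_neg_mul_div_rpow ha₀ (by linarith)]
    _ ≤ (a : ℝ) ^ (-1 : ℝ) * T ^ (1 - s) * (1 + log T) ^ k := by
        have hlog : log (T / a) ≤ log T :=
          log_le_log (by positivity) (div_le_self (by linarith) (by exact_mod_cast (by omega)))
        refine mul_le_mul_of_nonneg_left (pow_le_pow_left₀ ?_ (by linarith) k)
          (mul_nonneg (by positivity) (rpow_nonneg (by linarith) _))
        linarith [log_nonneg hTa]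
    _ = (a : ℝ) ^ (-1 : ℝ) * (T ^ (1 - s) * (1 + log T) ^ k) := mul_assoc _ _ _

lemma tailSum_add_two_le (hs : 1 < s) {k : ℕ} {C : ℝ≥0∞}
    (hC : ∀ x, 1 ≤ x →
      tailSum s (k + 1) x ≤ C * ENNReal.ofReal (x ^ (1 - s) * (1 + log x) ^ k))
    {T : ℝ} (hT : 1 ≤ T) :
    tailSum s (k + 2) T ≤
      C * (ENNReal.ofReal (log T) * ENNReal.ofReal (T ^ (1 - s) * (1 + log T) ^ k)) +
        ENNReal.ofReal (2 ^ (s - 1) / (s - 1)) * (∑' a, weight s a) ^ (k + 1) *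
          ENNReal.ofReal (T ^ (1 - s)) := by
  set X := ENNReal.ofReal (T ^ (1 - s) * (1 + log T) ^ k)
  calc tailSum s (k + 2) T
      ≤ ∑' a : ℕ, (if (a : ℝ) ≤ T then weight s a *
            (C * ENNReal.ofReal ((T / a) ^ (1 - s) * (1 + log (T / a)) ^ k)) else 0) +
          (∑' a : ℕ, if T < a then weight s a else 0) * (∑' a, weight s a) ^ (k + 1) :=
        tailSum_succ_le hC T
    _ ≤ (∑' a : ℕ, if (a : ℝ) ≤ T then weight 1 a else 0) * (C * X) +
          ENNReal.ofReal (2 ^ (s - 1) / (s - 1)) * ENNReal.ofReal (T ^ (1 - s)) *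
            (∑' a, weight s a) ^ (k + 1) := by
        refine add_le_add ?_ (by gcongr; exact tsum_weight_gt_le hs hT)
        rw [← ENNReal.tsum_mul_right]
        refine ENNReal.tsum_le_tsum fun a => ?_
        split_ifs with haT
        · rw [mul_left_comm (weight s a), mul_left_comm (weight 1 a)]
          gcongr C * ?_
          exact weight_mul_ofReal_le haT k
        · simp
    _ ≤ ENNReal.ofReal (log T) * (C * X) +
          ENNReal.ofReal (2 ^ (s - 1) / (s - 1)) * ENNReal.ofReal (T ^ (1 - s)) *
            (∑' a, weight s a) ^ (k + 1) := by
        gcongr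
        exact tsum_weight_one_le_log hT
    _ = _ := by ring

theorem exists_tailSum_succ_le (hs : 1 < s) (k : ℕ) :
    ∃ C : ℝ≥0∞, C ≠ ∞ ∧ ∀ T : ℝ, 1 ≤ T →
      tailSum s (k + 1) T ≤ C * ENNReal.ofReal (T ^ (1 - s) * (1 + log T) ^ k) := by
  set c := ENNReal.ofReal (2 ^ (s - 1) / (s - 1))
  induction k with
  | zero =>
    refine ⟨c, ENNReal.ofReal_ne_top, fun T hT => ?_⟩
    have hB (x : ℝ) (hx : 1 ≤ x) : tailSum s 0 x ≤ 0 := by simp [tailSum_zero, hx.not_gt]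
    simpa using (tailSum_succ_le hB T).trans (by simpa using tsum_weight_gt_le hs hT)
  | succ k ih =>
    obtain ⟨C, hC, hbound⟩ := ih
    have hZ : ∑' a, weight s a ≠ ∞ := tsum_weight_ne_top hs
    refine ⟨C + c * (∑' a, weight s a) ^ (k + 1), by finiteness, fun T hT => ?_⟩
    have hlog : 0 ≤ log T := log_nonneg hT
    have hT₀ : 0 ≤ T ^ (1 - s) := rpow_nonneg (by linarith) _
    have hlogX : ENNReal.ofReal (log T) * ENNReal.ofReal (T ^ (1 - s) * (1 + log T) ^ k) ≤
        ENNReal.ofReal (T ^ (1 - s) * (1 + log T) ^ (k + 1)) := by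
      rw [← ENNReal.ofReal_mul hlog, pow_succ]
      refine ENNReal.ofReal_le_ofReal ?_
      nlinarith [mul_nonneg hT₀ (pow_nonneg (by linarith : (0 : ℝ) ≤ 1 + log T) k)]
    have hX : ENNReal.ofReal (T ^ (1 - s)) ≤
        ENNReal.ofReal (T ^ (1 - s) * (1 + log T) ^ (k + 1)) :=
      ENNReal.ofReal_le_ofReal (le_mul_of_one_le_right hT₀ (one_le_pow₀ (by linarith)))
    refine (tailSum_add_two_le hs hbound hT).trans ?_
    rw [add_mul]
    gcongr

theorem exists_tailSum_le_log_pow (hs : 1 < s) {k : ℕ} (hk : 1 ≤ k) :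
    ∃ C : ℝ≥0∞, C ≠ ∞ ∧ ∀ T : ℝ, 2 ≤ T →
      tailSum s k T ≤ C * ENNReal.ofReal (T ^ (1 - s) * log T ^ (k - 1)) := by
  obtain ⟨n, rfl⟩ : ∃ n, k = n + 1 := ⟨k - 1, by omega⟩
  obtain ⟨C, hC, hbound⟩ := exists_tailSum_succ_le hs n
  refine ⟨C * ENNReal.ofReal (3 ^ n), by finiteness,
    fun T hT => (hbound T (by linarith)).trans ?_⟩
  have hlog : 0 ≤ log T := log_nonneg (by linarith)
  rw [Nat.add_sub_cancel, mul_assoc, ← ENNReal.ofReal_mul (by positivity), mul_left_comm,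
    ← mul_pow]
  gcongr
  exact one_add_log_le_three_mul_log hT

lemma tsum_ofReal_le_tailSum {k : ℕ} {T : ℝ} {P : Set (Fin k → ℕ)}
    (hP : ∀ i ∈ P, (∀ j, 2 ≤ i j) ∧ T < ∏ j, (i j : ℝ)) :
    ∑' i : P, ENNReal.ofReal ((∏ j, ((i : Fin k → ℕ) j : ℝ)) ^ (-s)) ≤
      tailSum s k T := by
  rw [tsum_subtype P fun i => ENNReal.ofReal ((∏ j, (i j : ℝ)) ^ (-s))]
  refine ENNReal.tsum_le_tsum fun i => ?_
  by_cases hi : i ∈ P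
  · rw [Set.indicator_of_mem hi, if_pos (hP i hi).2, prod_weight_eq (hP i hi).1]
  · rw [Set.indicator_of_notMem hi]
    exact zero_le

end TailSum

theorem tail_sum_bound_general (p q m : ℕ) (hq : q < p) (hm : 1 ≤ m)
    (α : ℝ) (hα0 : 0 < α) (hα2 : α < 2) :
    ∃ C : ℝ, 0 < C ∧ ∀ K R : ℝ, 1 ≤ K → 2 ≤ R → ((m : ℝ) + 1) ^ p ≤ K * R →
      (Summable fun i : {i : Fin (p - q) → ℕ // StrictMono i ∧
          (∀ j, m < i j) ∧ K * R < ∏ j, (i j : ℝ)} =>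
        (∏ j, ((i : Fin (p - q) → ℕ) j : ℝ)) ^ (-(2 / α))) ∧
      (∑' i : {i : Fin (p - q) → ℕ // StrictMono i ∧
          (∀ j, m < i j) ∧ K * R < ∏ j, (i j : ℝ)},
        (∏ j, ((i : Fin (p - q) → ℕ) j : ℝ)) ^ (-(2 / α)))
        ≤ C * (K * R) ^ (1 - 2 / α) * (Real.log (K * R)) ^ (p - q - 1) := by
  have hs : 1 < 2 / α := by rw [lt_div_iff₀ hα0]; linarith
  obtain ⟨C, hC, hbound⟩ := TailSum.exists_tailSum_le_log_pow hs (k := p - q) (by omega)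
  refine ⟨C.toReal + 1, by positivity, fun K R hK hR _ => ?_⟩
  have hT : 2 ≤ K * R := by nlinarith
  have hrate : 0 ≤ (K * R) ^ (1 - 2 / α) * log (K * R) ^ (p - q - 1) :=
    mul_nonneg (rpow_nonneg (by linarith) _) (pow_nonneg (log_nonneg (by linarith)) _)
  rw [mul_assoc]
  refine summable_and_tsum_le_of_tsum_ofReal_le (fun i => by positivity) (by positivity) ?_
  calc _ ≤ TailSum.tailSum (2 / α) (p - q) (K * R) :=
        TailSum.tsum_ofReal_le_tailSum fun i hi => ⟨fun j => by have := hi.2.1 j; omega, hi.2.2⟩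
    _ ≤ C * ENNReal.ofReal ((K * R) ^ (1 - 2 / α) * log (K * R) ^ (p - q - 1)) := hbound _ hT
    _ ≤ ENNReal.ofReal (C.toReal + 1) *
          ENNReal.ofReal ((K * R) ^ (1 - 2 / α) * log (K * R) ^ (p - q - 1)) := by
        gcongr
        rw [ENNReal.le_ofReal_iff_toReal_le hC (by positivity)]
        linarith
    _ = _ := (ENNReal.ofReal_mul (by positivity)).symm

/-- Tail estimate: the sum of `(i_{q+1}⋯i_p)^{-2/α}` over increasing tuples with
all components exceeding `m` and product exceeding `K·R` is at most
`C (KR)^{1-2/α} (log(KR))^{p-q-1}`. -/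
theorem tail_sum_bound (p q m : ℕ) (hp : 1 ≤ p) (hq : q < p) (hm : 1 ≤ m)
    (α : ℝ) (hα0 : 0 < α) (hα2 : α < 2) :
    ∃ C : ℝ, 0 < C ∧ ∀ K R : ℝ, 1 ≤ K → 2 ≤ R → ((m : ℝ) + 1) ^ p ≤ K * R →
      (Summable fun i : {i : Fin (p - q) → ℕ // StrictMono i ∧
          (∀ j, m < i j) ∧ K * R < ∏ j, (i j : ℝ)} =>
        (∏ j, ((i : Fin (p - q) → ℕ) j : ℝ)) ^ (-(2 / α))) ∧
      (∑' i : {i : Fin (p - q) → ℕ // StrictMono i ∧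
          (∀ j, m < i j) ∧ K * R < ∏ j, (i j : ℝ)},
        (∏ j, ((i : Fin (p - q) → ℕ) j : ℝ)) ^ (-(2 / α)))
        ≤ C * (K * R) ^ (1 - 2 / α) * (Real.log (K * R)) ^ (p - q - 1) :=
  tail_sum_bound_general p q m hq hm α hα0 hα2
end
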